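/- arXiv:1912.04550 — 10 statements merged into one kernel-verified Lean document; each statement's English description precedes it below -/
import Mathlib

section
/- If G is a finite non-abelian group, then d(G) ≤ 5/8, with equality if and only if G/Z(G) is isomorphic to the Klein four group C₂ × C₂. -/
/-- The relative commutativity degree `d(H,G)` of a subgroup `H` of a group `G`. -/
noncomputable def relCommDeg {G : Type*} [Group G] (H : Subgroup G) : ℚ :=
  (Nat.card {p : H × G // (p.1 : G) * p.2 = p.2 * (p.1 : G)} : ℚ) /
    ((Nat.card H : ℚ) * (Nat.card G : ℚ))

/-- The set `D(G)` of all relative commutativity degrees of `G`. -/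
noncomputable def commDegSet (G : Type*) [Group G] : Set ℚ :=
  {q | ∃ H : Subgroup G, relCommDeg H = q}

theorem commDeg_le_five_eighths (G : Type*) [Group G] [Finite G]
    (hG : ¬ ∀ a b : G, a * b = b * a) :
    relCommDeg (⊤ : Subgroup G) ≤ 5 / 8 ∧
      (relCommDeg (⊤ : Subgroup G) = 5 / 8 ↔
        Nonempty ((G ⧸ Subgroup.center G) ≃* Multiplicative (ZMod 2 × ZMod 2))) := by
  classical
  cases nonempty_fintype G
  set Z := Subgroup.center G with hZdef
  set n := Nat.card G with hn
  set z := Nat.card Z with hz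
  have hnpos : 0 < n := Nat.card_pos
  have hzpos : 0 < z := Nat.card_pos
  -- rewrite relCommDeg ⊤
  have e : {p : (⊤ : Subgroup G) × G // (p.1 : G) * p.2 = p.2 * (p.1 : G)} ≃
      {p : G × G // Commute p.1 p.2} :=
    ⟨fun q => ⟨((q.1.1 : G), q.1.2), q.2⟩,
     fun q => ⟨(⟨q.1.1, Subgroup.mem_top _⟩, q.1.2), q.2⟩,
     fun q => rfl, fun q => rfl⟩
  set S := ∑ x : G, Nat.card (Subgroup.centralizer ({x} : Set G)) with hS
  have hkey : relCommDeg (⊤ : Subgroup G) = (S : ℚ) / ((n : ℚ) * (n : ℚ)) := by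
    unfold relCommDeg
    rw [Nat.card_congr e, Subgroup.card_top]
    congr 1
    rw [Nat.card_eq_fintype_card,
      Fintype.card_congr (Equiv.subtypeProdEquivSigmaSubtype Commute),
      Fintype.card_sigma, hS]
    norm_cast
    refine Finset.sum_congr rfl fun x _ => ?_
    rw [← Nat.card_eq_fintype_card]
    refine Nat.card_congr (Equiv.subtypeEquivRight fun y => ?_)
    rw [Subgroup.mem_centralizer_singleton_iff]
    exact ⟨fun h => h.symm, fun h => h.symm⟩
  -- centralizers of central elements
  have hcent : ∀ x : G, x ∈ Z → Subgroup.centralizer ({x} : Set G) = ⊤ := by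
    intro x hx
    rw [Subgroup.eq_top_iff']
    intro y
    rw [Subgroup.mem_centralizer_singleton_iff]
    exact Subgroup.mem_center_iff.mp hx y
  have hcent' : ∀ x : G, x ∉ Z → Subgroup.centralizer ({x} : Set G) ≠ ⊤ := by
    intro x hx h
    exact hx (Subgroup.mem_center_iff.mpr fun y =>
      Subgroup.mem_centralizer_singleton_iff.mp (h ▸ Subgroup.mem_top y))
  have hnc : ∀ x : G, x ∉ Z → 2 * Nat.card (Subgroup.centralizer ({x} : Set G)) ≤ n := by
    intro x hx
    have h1 : 1 < (Subgroup.centralizer ({x} : Set G)).index :=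
      Subgroup.one_lt_index_of_ne_top (hcent' x hx)
    have h2 := Subgroup.card_mul_index (Subgroup.centralizer ({x} : Set G))
    calc 2 * Nat.card (Subgroup.centralizer ({x} : Set G))
        ≤ (Subgroup.centralizer ({x} : Set G)).index *
            Nat.card (Subgroup.centralizer ({x} : Set G)) := Nat.mul_le_mul_right _ h1
      _ = n := by rw [mul_comm]; exact h2
  -- G/Z is not cyclic
  have habel : ¬ IsCyclic (G ⧸ Z) := by
    intro h
    exact hG fun a b => commutative_of_cyclic_center_quotient (QuotientGroup.mk' Z)
      (by rw [QuotientGroup.ker_mk']) a b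
  have hzidx := Subgroup.card_mul_index Z
  have hZindex : 4 ≤ Z.index := by
    by_contra h
    push_neg at h
    have h0 : Z.index ≠ 0 := Subgroup.index_ne_zero_of_finite
    have hcard : Nat.card (G ⧸ Z) = Z.index := (Subgroup.index_eq_card Z).symm
    have h123 : Z.index = 1 ∨ Z.index = 2 ∨ Z.index = 3 := by omega
    rcases h123 with hi | hi | hi
    · obtain ⟨a, hab⟩ := not_forall.mp hG
      obtain ⟨b, hab⟩ := not_forall.mp hab
      have : a ∈ Z := Subgroup.index_eq_one.mp hi ▸ Subgroup.mem_top a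
      exact hab ((Subgroup.mem_center_iff.mp this b).symm)
    · haveI : Fact (Nat.Prime 2) := ⟨by norm_num⟩
      exact habel (isCyclic_of_prime_card (hcard.trans hi))
    · haveI : Fact (Nat.Prime 3) := ⟨by norm_num⟩
      exact habel (isCyclic_of_prime_card (hcard.trans hi))
  have h4z : 4 * z ≤ n := by
    calc 4 * z = z * 4 := by ring
      _ ≤ z * Z.index := Nat.mul_le_mul_left z hZindex
      _ = n := hzidx
  -- split the sum
  set s₁ := Finset.univ.filter (· ∈ Z) with hs₁
  set s₂ := Finset.univ.filter (· ∉ Z) with hs₂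
  have hsplit : S = (∑ x ∈ s₁, Nat.card (Subgroup.centralizer ({x} : Set G))) +
      ∑ x ∈ s₂, Nat.card (Subgroup.centralizer ({x} : Set G)) :=
    (Finset.sum_filter_add_sum_filter_not _ _ _).symm
  have hs₁card : s₁.card = z := by
    rw [hz, Nat.card_eq_fintype_card, hs₁, Fintype.card_subtype]
  have hmz : s₁.card + s₂.card = n := by
    rw [hs₁, hs₂, Finset.card_filter_add_card_filter_not, Finset.card_univ, hn,
      Nat.card_eq_fintype_card]
  have hsum₁ : ∑ x ∈ s₁, Nat.card (Subgroup.centralizer ({x} : Set G)) = z * n := by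
    rw [Finset.sum_congr rfl fun x hx => by
      rw [hcent x (Finset.mem_filter.mp hx).2, Subgroup.card_top],
      Finset.sum_const, smul_eq_mul, hs₁card]
  have hsum₂le : 2 * (∑ x ∈ s₂, Nat.card (Subgroup.centralizer ({x} : Set G))) ≤ s₂.card * n := by
    rw [Finset.mul_sum]
    calc ∑ x ∈ s₂, 2 * Nat.card (Subgroup.centralizer ({x} : Set G))
        ≤ s₂.card • n := Finset.sum_le_card_nsmul _ _ _ fun x hx =>
          hnc x (Finset.mem_filter.mp hx).2
      _ = s₂.card * n := by simp
  have hA : z * n + s₂.card * n = n * n := by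
    rw [← Nat.add_mul, ← hs₁card, hmz]
  have h4A : 4 * (z * n) ≤ n * n := by
    calc 4 * (z * n) = (4 * z) * n := by ring
      _ ≤ n * n := Nat.mul_le_mul_right n h4z
  -- the main nat inequality
  have hle : 8 * S ≤ 5 * (n * n) := by
    have := hsum₂le
    omega
  constructor
  · rw [hkey, div_le_div_iff₀ (by positivity) (by norm_num)]
    exact_mod_cast (show S * 8 ≤ 5 * (n * n) by omega)
  · rw [hkey, div_eq_div_iff (by positivity) (by norm_num)]
    have hiff : (S : ℚ) * 8 = 5 * ((n : ℚ) * n) ↔ S * 8 = 5 * (n * n) := by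
      exact_mod_cast Iff.rfl
    rw [hiff]
    constructor
    · -- equality implies Klein four quotient
      intro h
      have h4a : 4 * (z * n) = n * n := by omega
      have hzn : 4 * z = n := by
        refine Nat.eq_of_mul_eq_mul_right hnpos ?_
        rw [mul_assoc]; exact h4a
      have hidx4 : Z.index = 4 := by
        refine Nat.eq_of_mul_eq_mul_left hzpos ?_
        rw [hzidx, ← hn, ← hzn]; ring
      have hcard4 : Nat.card (G ⧸ Z) = 4 := by
        rw [← Subgroup.index_eq_card]; exact hidx4
      haveI : Fintype (G ⧸ Z) := Fintype.ofFinite _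
      have hK : IsKleinFour (G ⧸ Z) := by
        refine ⟨hcard4, ?_⟩
        have hdvd : Monoid.exponent (G ⧸ Z) ∣ 4 := by
          have := Group.exponent_dvd_card (G := G ⧸ Z)
          rwa [← Nat.card_eq_fintype_card, hcard4] at this
        have hne1 : Monoid.exponent (G ⧸ Z) ≠ 1 := by
          intro h1
          have : ∀ g : G ⧸ Z, g = 1 := fun g => by
            have := Monoid.pow_exponent_eq_one g
            rwa [h1, pow_one] at this
          haveI : Subsingleton (G ⧸ Z) := ⟨fun a b => (this a).trans (this b).symm⟩
          have := Nat.card_of_subsingleton (1 : G ⧸ Z)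
          omega
        have hne4 : Monoid.exponent (G ⧸ Z) ≠ 4 := by
          intro h4
          haveI : Fact (Nat.Prime 2) := ⟨by norm_num⟩
          letI : CommGroup (G ⧸ Z) :=
            IsPGroup.commGroupOfCardEqPrimeSq (p := 2) (by rw [hcard4]; norm_num)
          obtain ⟨g, hg⟩ := Monoid.exists_orderOf_eq_exponent
            (Monoid.ExponentExists.of_finite (G := G ⧸ Z))
          exact habel (isCyclic_of_orderOf_eq_card g (by rw [hg, h4, hcard4]))
        have h2 : (4 : ℕ) = 2 ^ 2 := by norm_num
        rw [h2] at hdvd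
        obtain ⟨i, hi, hieq⟩ := (Nat.dvd_prime_pow Nat.prime_two).mp hdvd
        interval_cases i
        · exact absurd hieq (by simpa using hne1)
        · simpa using hieq
        · exact absurd hieq (by norm_num at hne4 ⊢; exact hne4)
      exact hK.nonempty_mulEquiv
    · -- Klein four quotient implies equality
      rintro ⟨e⟩
      have hcard4 : Nat.card (G ⧸ Z) = 4 := by
        rw [Nat.card_congr e.toEquiv]
        exact IsKleinFour.card_four
      have hidx4 : Z.index = 4 := by rw [Subgroup.index_eq_card]; exact hcard4
      have hzn : n = 4 * z := by rw [hn, ← hzidx, hidx4, hz]; ring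
      -- every noncentral centralizer has index 2
      have hnc2 : ∀ x : G, x ∉ Z → 2 * Nat.card (Subgroup.centralizer ({x} : Set G)) = n := by
        intro x hx
        set C := Subgroup.centralizer ({x} : Set G) with hC
        have hZC : Z ≤ C := Subgroup.center_le_centralizer {x}
        have hdvd : C.index ∣ 4 := hidx4 ▸ Subgroup.index_dvd_of_le hZC
        have hCmul := Subgroup.card_mul_index C
        have hne1 : C.index ≠ 1 := fun h1 => hcent' x hx (Subgroup.index_eq_one.mp h1)
        have hne4 : C.index ≠ 4 := by
          intro h4
          have hcards : Nat.card C = z := by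
            have : Nat.card C * 4 = z * 4 := by rw [h4] at hCmul; rw [hCmul, ← hn, hzn]; ring
            omega
          have : Z = C := Subgroup.eq_of_le_of_card_ge hZC (le_of_eq hcards)
          exact hx (this ▸ Subgroup.mem_centralizer_singleton_iff.mpr rfl)
        have h2 : (4 : ℕ) = 2 ^ 2 := by norm_num
        rw [h2] at hdvd
        obtain ⟨i, hi, hieq⟩ := (Nat.dvd_prime_pow Nat.prime_two).mp hdvd
        have hCidx : C.index = 2 := by
          interval_cases i
          · exact absurd hieq (by simpa using hne1)
          · simpa using hieq
          · exact absurd hieq (by norm_num at hne4 ⊢; exact hne4)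
        rw [hn, ← hCmul, hCidx]; ring
      have hsum₂ : 2 * (∑ x ∈ s₂, Nat.card (Subgroup.centralizer ({x} : Set G)))
          = s₂.card * n := by
        rw [Finset.mul_sum, Finset.sum_congr rfl fun x hx =>
          hnc2 x (Finset.mem_filter.mp hx).2, Finset.sum_const, smul_eq_mul]
      have h4a : n * n = 4 * (z * n) := by rw [hzn]; ring
      omega
end

section
/- Let G be a finite group and H ≤ K ≤ G subgroups. Then d(K,G) ≤ d(H,G), with equality if and only if K = H·C_K(g) for all g ∈ G. -/
open scoped Pointwise

private lemma natCard_sigma' {ι : Type*} [Fintype ι] (f : ι → Type*) [∀ i, Finite (f i)] :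
    Nat.card (Σ i, f i) = ∑ i, Nat.card (f i) := by
  letI : ∀ i, Fintype (f i) := fun i => Fintype.ofFinite _
  simp [Nat.card_eq_fintype_card, Fintype.card_sigma]

private lemma card_set_mul_inf {G : Type*} [Group G] [Finite G] (A B : Subgroup G) :
    Nat.card (↑A * ↑B : Set G) * Nat.card ↥(A ⊓ B) = Nat.card A * Nat.card B := by
  classical
  letI := Fintype.ofFinite G
  set s : Set G := ↑A * ↑B with hs
  haveI : Finite ↥s := Set.Finite.to_subtype s.toFinite
  letI : Fintype ↥s := Fintype.ofFinite _
  let m : A × B → ↥s := fun p => ⟨↑p.1 * ↑p.2, Set.mul_mem_mul p.1.2 p.2.2⟩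
  have key : ∀ y : ↥s, Nat.card {x : A × B // m x = y} = Nat.card ↥(A ⊓ B) := by
    intro y
    obtain ⟨a, ha, b, hb, hab⟩ := y.2
    have hab' : a * b = (y : G) := hab
    refine Nat.card_congr ⟨fun x => ⟨a⁻¹ * ↑x.1.1, ?_⟩,
      fun d => ⟨(⟨a * ↑d, A.mul_mem ha (Subgroup.mem_inf.1 d.2).1⟩,
        ⟨(↑d)⁻¹ * b, B.mul_mem (B.inv_mem (Subgroup.mem_inf.1 d.2).2) hb⟩), ?_⟩, ?_, ?_⟩
    · have hx : (↑x.1.1 : G) * ↑x.1.2 = a * b := by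
        rw [hab']; exact congrArg Subtype.val x.2
      refine Subgroup.mem_inf.2 ⟨A.mul_mem (A.inv_mem ha) x.1.1.2, ?_⟩
      have h2 : a⁻¹ * ↑x.1.1 = b * (↑x.1.2)⁻¹ := by
        rw [inv_mul_eq_iff_eq_mul, ← mul_assoc, eq_mul_inv_iff_mul_eq]
        exact hx
      rw [h2]
      exact B.mul_mem hb (B.inv_mem x.1.2.2)
    · apply Subtype.ext
      show a * ↑d * ((↑d)⁻¹ * b) = ↑y
      rw [← hab']; group
    · rintro ⟨⟨h, c⟩, hx⟩
      have hcv : (↑h : G) * ↑c = a * b := by rw [hab']; exact congrArg Subtype.val hx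
      apply Subtype.ext
      apply Prod.ext
      · apply Subtype.ext; show a * (a⁻¹ * ↑h) = ↑h; group
      · apply Subtype.ext
        show (a⁻¹ * ↑h)⁻¹ * b = ↑c
        rw [mul_inv_rev, inv_inv, mul_assoc, ← hcv]
        group
    · intro d
      apply Subtype.ext
      show a⁻¹ * (a * ↑d) = ↑d
      group
  have hcard := Nat.card_congr (Equiv.sigmaFiberEquiv m)
  rw [Nat.card_prod] at hcard
  rw [← hcard, natCard_sigma']
  simp only [key, Finset.sum_const, Finset.card_univ, smul_eq_mul]
  rw [Nat.card_eq_fintype_card]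

private lemma card_comm_pairs {G : Type*} [Group G] [Finite G] [Fintype G] (L : Subgroup G) :
    Nat.card {p : L × G // (p.1 : G) * p.2 = p.2 * (p.1 : G)} =
      ∑ g : G, Nat.card ↥(Subgroup.centralizer {g} ⊓ L) := by
  have e1 : {p : L × G // (p.1 : G) * p.2 = p.2 * (p.1 : G)} ≃
      Σ g : G, {h : L // (h : G) * g = g * (h : G)} :=
    ((Equiv.prodComm L G).subtypeEquiv (fun p => by simp)).trans
      (Equiv.subtypeProdEquivSigmaSubtype (fun (g : G) (h : L) => (h : G) * g = g * (h : G)))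
  have e2 : ∀ g : G, {h : L // (h : G) * g = g * (h : G)} ≃
      ↥(Subgroup.centralizer {g} ⊓ L) := fun g =>
    { toFun := fun h => ⟨↑h.1, Subgroup.mem_inf.2
        ⟨Subgroup.mem_centralizer_singleton_iff.2 h.2, h.1.2⟩⟩
      invFun := fun x => ⟨⟨↑x, (Subgroup.mem_inf.1 x.2).2⟩,
        (Subgroup.mem_centralizer_singleton_iff.1 (Subgroup.mem_inf.1 x.2).1)⟩
      left_inv := fun h => rfl
      right_inv := fun x => rfl }
  rw [Nat.card_congr e1, natCard_sigma']
  exact Finset.sum_congr rfl fun g _ => Nat.card_congr (e2 g)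

open scoped Pointwise in
theorem relCommDeg_antitone_iff (G : Type*) [Group G] [Finite G]
    (H K : Subgroup G) (hHK : H ≤ K) :
    relCommDeg K ≤ relCommDeg H ∧
      (relCommDeg K = relCommDeg H ↔
        ∀ g : G, (K : Set G) =
          (H : Set G) * ((Subgroup.centralizer {g} ⊓ K : Subgroup G) : Set G)) := by
  classical
  letI := Fintype.ofFinite G
  set nn : Subgroup G → G → ℕ :=
    fun L g => Nat.card ↥(Subgroup.centralizer {g} ⊓ L) with hnn
  -- auxiliary facts per element g
  have hinf : ∀ g : G, Subgroup.centralizer {g} ⊓ H =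
      H ⊓ (Subgroup.centralizer {g} ⊓ K) := by
    intro g
    ext x
    simp only [Subgroup.mem_inf]
    constructor
    · rintro ⟨h1, h2⟩; exact ⟨h2, h1, hHK h2⟩
    · rintro ⟨h1, h2, _⟩; exact ⟨h2, h1⟩
  have hsub : ∀ g : G,
      ((H : Set G) * ((Subgroup.centralizer {g} ⊓ K : Subgroup G) : Set G)) ⊆ (K : Set G) := by
    intro g x hx
    obtain ⟨a, ha, b, hb, rfl⟩ := Set.mem_mul.1 hx
    exact K.mul_mem (hHK ha) (Subgroup.mem_inf.1 hb).2
  have key : ∀ g : G, nn K g * Nat.card H =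
      Nat.card ↥((H : Set G) * ((Subgroup.centralizer {g} ⊓ K : Subgroup G) : Set G)) *
        nn H g := by
    intro g
    rw [hnn]
    simp only
    rw [hinf g, mul_comm, ← card_set_mul_inf H (Subgroup.centralizer {g} ⊓ K)]
  have hcardK : ∀ g : G,
      Nat.card ↥((H : Set G) * ((Subgroup.centralizer {g} ⊓ K : Subgroup G) : Set G)) ≤
        Nat.card K := by
    intro g
    have : Nat.card ↥(K : Set G) = Nat.card K := by rw [SetLike.coe_sort_coe]
    rw [← this, Nat.card_coe_set_eq, Nat.card_coe_set_eq]
    exact Set.ncard_le_ncard (hsub g) (K : Set G).toFinite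
  have hnHpos : ∀ g : G, 0 < nn H g := fun g => Nat.card_pos
  have pointwise : ∀ g : G, nn K g * Nat.card H ≤ nn H g * Nat.card K := by
    intro g
    rw [key g, mul_comm (nn H g)]
    exact Nat.mul_le_mul_right _ (hcardK g)
  have pointeq : ∀ g : G, (nn K g * Nat.card H = nn H g * Nat.card K ↔
      (K : Set G) = (H : Set G) * ((Subgroup.centralizer {g} ⊓ K : Subgroup G) : Set G)) := by
    intro g
    rw [key g, mul_comm (nn H g)]
    constructor
    · intro h
      have hc : Nat.card ↥((H : Set G) * ((Subgroup.centralizer {g} ⊓ K : Subgroup G) : Set G))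
          = Nat.card K := Nat.eq_of_mul_eq_mul_right (hnHpos g) h
      have hK : Nat.card ↥(K : Set G) = Nat.card K := by rw [SetLike.coe_sort_coe]
      refine (Set.eq_of_subset_of_ncard_le (hsub g) ?_ (K : Set G).toFinite).symm
      rw [← Nat.card_coe_set_eq, ← Nat.card_coe_set_eq, hc, hK]
    · intro h
      congr 1
      rw [← h, SetLike.coe_sort_coe]
  -- sum versions
  have sumle : (∑ g : G, nn K g) * Nat.card H ≤ (∑ g : G, nn H g) * Nat.card K := by
    rw [Finset.sum_mul, Finset.sum_mul]
    exact Finset.sum_le_sum fun g _ => pointwise g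
  have sumeq : ((∑ g : G, nn K g) * Nat.card H = (∑ g : G, nn H g) * Nat.card K) ↔
      ∀ g : G, (K : Set G) =
        (H : Set G) * ((Subgroup.centralizer {g} ⊓ K : Subgroup G) : Set G) := by
    rw [Finset.sum_mul, Finset.sum_mul,
      Finset.sum_eq_sum_iff_of_le (fun g _ => pointwise g)]
    constructor
    · intro h g; exact (pointeq g).1 (h g (Finset.mem_univ g))
    · intro h g _; exact (pointeq g).2 (h g)
  -- positivity of cardinalities
  have hH0 : (0 : ℚ) < (Nat.card H : ℚ) := by exact_mod_cast Nat.card_pos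
  have hK0 : (0 : ℚ) < (Nat.card K : ℚ) := by exact_mod_cast Nat.card_pos
  have hG0 : (0 : ℚ) < (Nat.card G : ℚ) := by exact_mod_cast Nat.card_pos
  have hrK : relCommDeg K = ((∑ g : G, nn K g : ℕ) : ℚ) /
      ((Nat.card K : ℚ) * (Nat.card G : ℚ)) := by
    rw [relCommDeg, card_comm_pairs]
  have hrH : relCommDeg H = ((∑ g : G, nn H g : ℕ) : ℚ) /
      ((Nat.card H : ℚ) * (Nat.card G : ℚ)) := by
    rw [relCommDeg, card_comm_pairs]
  have hsumleQ : ((∑ g : G, nn K g : ℕ) : ℚ) * (Nat.card H : ℚ) ≤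
      ((∑ g : G, nn H g : ℕ) : ℚ) * (Nat.card K : ℚ) := by exact_mod_cast sumle
  constructor
  · rw [hrK, hrH, div_le_div_iff₀ (by positivity) (by positivity)]
    nlinarith [hsumleQ, hG0]
  · rw [hrK, hrH, div_eq_div_iff (by positivity) (by positivity)]
    rw [show ((∑ g : G, nn K g : ℕ) : ℚ) * ((Nat.card H : ℚ) * (Nat.card G : ℚ)) =
      (((∑ g : G, nn K g : ℕ) : ℚ) * (Nat.card H : ℚ)) * (Nat.card G : ℚ) by ring,
      show ((∑ g : G, nn H g : ℕ) : ℚ) * ((Nat.card K : ℚ) * (Nat.card G : ℚ)) =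
      (((∑ g : G, nn H g : ℕ) : ℚ) * (Nat.card K : ℚ)) * (Nat.card G : ℚ) by ring,
      mul_left_inj' (ne_of_gt hG0)]
    rw [show (((∑ g : G, nn K g : ℕ) : ℚ) * (Nat.card H : ℚ) =
        ((∑ g : G, nn H g : ℕ) : ℚ) * (Nat.card K : ℚ)) ↔
      ((∑ g : G, nn K g) * Nat.card H = (∑ g : G, nn H g) * Nat.card K) by
        exact_mod_cast Iff.rfl]
    exact sumeq
end

section
/- For any subgroup H of a finite group G and any central subgroup Z ≤ Z(G), one has d(HZ, G) = d(H, G). -/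
namespace Subgroup

variable {G : Type*} [Group G]

theorem normal_of_le_center {Z : Subgroup G} (hZ : Z ≤ center G) : Z.Normal :=
  ⟨fun n hn g => by rwa [mem_center_iff.mp (hZ hn) g, mul_inv_cancel_right]⟩

theorem inf_sup_normal_of_le {C N : Subgroup G} [N.Normal] (H : Subgroup G) (hN : N ≤ C) :
    C ⊓ (H ⊔ N) = C ⊓ H ⊔ N :=
  SetLike.coe_injective <| by
    rw [coe_inf, mul_normal, mul_normal, inf_mul_assoc _ _ _ hN]

theorem relIndex_sup_normal_of_le {C N : Subgroup G} [N.Normal] (H : Subgroup G) (hN : N ≤ C)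
    (hNH : N.relIndex H ≠ 0) : C.relIndex (H ⊔ N) = C.relIndex H := by
  have hNCH : N.relIndex (C ⊓ H) ≠ 0 := fun h =>
    hNH (relIndex_eq_zero_of_le_right inf_le_right h)
  have hsup : N.relIndex (C ⊓ H) * C.relIndex (H ⊔ N) = N.relIndex H := by
    rw [← relIndex_sup_right (C ⊓ H) N, ← inf_sup_normal_of_le H hN, relIndex_inf_mul_relIndex,
      inf_eq_left.mpr hN, relIndex_sup_right]
  have hinf : N.relIndex (C ⊓ H) * C.relIndex H = N.relIndex H := by
    rw [relIndex_inf_mul_relIndex, inf_eq_left.mpr hN]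
  exact Nat.eq_of_mul_eq_mul_left (Nat.pos_of_ne_zero hNCH) (hsup.trans hinf.symm)

theorem card_inf_mul_relIndex (K H : Subgroup G) :
    Nat.card (K ⊓ H : Subgroup G) * K.relIndex H = Nat.card H := by
  rw [← relIndex_bot_left, ← relIndex_bot_left, ← inf_relIndex_right K H,
    relIndex_mul_relIndex _ _ _ bot_le inf_le_right]

end Subgroup

open Subgroup

section

variable {G : Type*} [Group G]

theorem card_commuting_pairs_eq_sum_card_centralizer [Fintype G] (H : Subgroup G) :
    Nat.card {p : H × G // (p.1 : G) * p.2 = p.2 * (p.1 : G)} =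
      ∑ g : G, Nat.card (centralizer {g} ⊓ H : Subgroup G) := by
  let fiber (g : G) : {h : H // (h : G) * g = g * h} ≃ (centralizer {g} ⊓ H : Subgroup G) :=
    { toFun := fun h => ⟨h.1, mem_centralizer_singleton_iff.mpr h.2, h.1.2⟩
      invFun := fun x => ⟨⟨x, x.2.2⟩, mem_centralizer_singleton_iff.mp x.2.1⟩ }
  let e : {p : H × G // (p.1 : G) * p.2 = p.2 * (p.1 : G)} ≃
      Σ g : G, (centralizer {g} ⊓ H : Subgroup G) :=
    ((Equiv.prodComm H G).subtypeEquiv fun _ => Iff.rfl).trans <|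
      (Equiv.subtypeProdEquivSigmaSubtype fun (g : G) (h : H) => (h : G) * g = g * h).trans <|
        Equiv.sigmaCongrRight fiber
  rw [Nat.card_congr e, Nat.card_sigma]

theorem relCommDeg_eq_sum_inv_relIndex [Fintype G] (H : Subgroup G) :
    relCommDeg H = (∑ g : G, ((centralizer {g}).relIndex H : ℚ)⁻¹) / Nat.card G := by
  have hterm (g : G) : ((centralizer {g}).relIndex H : ℚ)⁻¹ =
      Nat.card (centralizer {g} ⊓ H : Subgroup G) / Nat.card H := by
    rw [← card_inf_mul_relIndex (centralizer {g}) H, Nat.cast_mul,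
      div_mul_cancel_left₀ (Nat.cast_ne_zero.mpr Nat.card_pos.ne')]
  rw [relCommDeg, card_commuting_pairs_eq_sum_card_centralizer, Finset.sum_congr rfl
    fun g _ => hterm g, ← Finset.sum_div, div_div, Nat.cast_sum]

end

theorem relCommDeg_sup_central (G : Type*) [Group G] [Finite G]
    (H Z : Subgroup G) (hZ : Z ≤ Subgroup.center G) :
    relCommDeg (H ⊔ Z) = relCommDeg H := by
  have := Fintype.ofFinite G
  have := normal_of_le_center hZ
  simp only [relCommDeg_eq_sum_inv_relIndex]
  congr 2 with g
  rw [relIndex_sup_normal_of_le H (hZ.trans (center_le_centralizer _))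
    isFiniteRelIndex_of_finiteIndex.relIndex_ne_zero]
end

section
/- Let G be a finite non-abelian group and x ∈ G such that the order of xZ(G) in G/Z(G) is divisible by a prime p. Then d(⟨x⟩, G) < d(⟨x^p⟩, G). -/
/-!
Counting commuting pairs by their first coordinate gives `|H| |G| d(H,G) = ∑_{h ∈ H} |C_G(h)|`.
Since `C_G(h) ≤ C_G(h^p)` and `h ↦ h^p` is a homomorphism from `⟨x⟩` onto `⟨x^p⟩` all of whose
fibres have the size of its kernel `K`,
`∑_{h ∈ ⟨x⟩} |C_G(h)| ≤ ∑_{h ∈ ⟨x⟩} |C_G(h^p)| = |K| ∑_{k ∈ ⟨x^p⟩} |C_G(k)|`, and dividing by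
`|⟨x⟩| = |K| |⟨x^p⟩|` gives `d(⟨x⟩,G) ≤ d(⟨x^p⟩,G)`. The inequality is strict at `y = x^(r/p)`,
`r` the order of `x Z(G)`: `y` is not central but `y^p = x^r` is, so `C_G(y) < G = C_G(y^p)`.
-/

open Subgroup

theorem MonoidHom.sum_comp_eq_card_ker_nsmul {A B M : Type*} [Group A] [Group B]
    [AddCommMonoid M] [Fintype A] (φ : A →* B) [Fintype φ.range] (F : B → M) :
    ∑ a, F (φ a) = Nat.card φ.ker • ∑ b : φ.range, F b := by
  classical
  calc ∑ a, F (φ a) = ∑ b : φ.range, ∑ a with φ.rangeRestrict a = b, F b :=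
        (Finset.sum_fiberwise' Finset.univ φ.rangeRestrict fun b => F b).symm
    _ = ∑ b : φ.range, Nat.card φ.ker • F b := by
        refine Finset.sum_congr rfl fun b _ => ?_
        rw [Finset.sum_const, ← φ.ker_rangeRestrict,
          ← Nat.card_congr (φ.rangeRestrict.fiberEquivKerOfSurjective φ.rangeRestrict_surjective b),
          Nat.card_eq_card_toFinset]
        congr 2
        ext a
        simp
    _ = _ := Finset.smul_sum.symm

section

variable {G : Type*} [Group G]

theorem card_commutingPairs_eq_sum_card_centralizer [Finite G] (H : Subgroup G) [Fintype H] :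
    Nat.card {q : H × G // (q.1 : G) * q.2 = q.2 * q.1} =
      ∑ h : H, Nat.card (centralizer {(h : G)}) := by
  rw [Nat.card_congr (Equiv.subtypeProdEquivSigmaSubtype fun (h : H) (g : G) => (h : G) * g = g * h),
    Nat.card_sigma]
  refine Finset.sum_congr rfl fun h _ => Nat.card_congr (Equiv.subtypeEquivRight fun g => ?_)
  rw [mem_centralizer_singleton_iff, eq_comm]

theorem relCommDeg_lt_relCommDeg_range [Finite G] {H : Subgroup G} (φ : H →* G)
    (hφ : ∀ h : H, centralizer {(h : G)} ≤ centralizer {φ h})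
    (hlt : ∃ h : H, centralizer {(h : G)} < centralizer {φ h}) :
    relCommDeg H < relCommDeg φ.range := by
  classical
  have := Fintype.ofFinite G
  obtain ⟨h₀, hh₀⟩ := hlt
  have hsum : ∑ h : H, Nat.card (centralizer {(h : G)}) <
      Nat.card φ.ker * ∑ k : φ.range, Nat.card (centralizer {(k : G)}) := by
    rw [← smul_eq_mul, ← φ.sum_comp_eq_card_ker_nsmul fun g => Nat.card (centralizer {g})]
    exact Finset.sum_lt_sum (fun h _ => card_le_of_le (hφ h))
      ⟨h₀, Finset.mem_univ _, Set.Finite.card_lt_card (Set.toFinite _) hh₀⟩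
  have hsumQ : ((∑ h : H, Nat.card (centralizer {(h : G)}) : ℕ) : ℚ) <
      Nat.card φ.ker * ((∑ k : φ.range, Nat.card (centralizer {(k : G)}) : ℕ) : ℚ) := by
    exact_mod_cast hsum
  have hK : 0 < Nat.card φ.ker := Nat.card_pos
  have hR : 0 < Nat.card φ.range := Nat.card_pos
  have hG : 0 < Nat.card G := Nat.card_pos
  have hpos : (0 : ℚ) < Nat.card φ.range * Nat.card G := by positivity
  unfold relCommDeg
  rw [card_commutingPairs_eq_sum_card_centralizer, card_commutingPairs_eq_sum_card_centralizer,
    ← card_mul_index φ.ker, index_ker, Nat.cast_mul, div_lt_div_iff₀ (by positivity) hpos]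
  linarith [mul_lt_mul_of_pos_right hsumQ hpos]

theorem Subgroup.centralizer_singleton_le_centralizer_pow (g : G) (n : ℕ) :
    centralizer {g} ≤ centralizer {g ^ n} :=
  fun _ hk => mem_centralizer_singleton_iff.mpr
    (Commute.pow_right (mem_centralizer_singleton_iff.mp hk) n)

theorem exists_mem_zpowers_notMem_pow_mem {N : Subgroup G} [N.Normal] [Finite (G ⧸ N)] {x : G}
    {n : ℕ} (hn : n ≠ 1) (hdvd : n ∣ orderOf (x : G ⧸ N)) :
    ∃ y ∈ zpowers x, y ∉ N ∧ y ^ n ∈ N := by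
  set y := x ^ (orderOf (x : G ⧸ N) / n)
  have hy : orderOf (y : G ⧸ N) = n := by
    rw [QuotientGroup.mk_pow]
    exact orderOf_pow_orderOf_div (orderOf_pos _).ne' hdvd
  refine ⟨y, npow_mem_zpowers _ _, ?_, ?_⟩
  · rw [← QuotientGroup.eq_one_iff, ← orderOf_eq_one_iff, hy]
    exact hn
  · rw [← QuotientGroup.eq_one_iff, QuotientGroup.mk_pow, ← hy]
    exact pow_orderOf_eq_one _

open scoped IsMulCommutative in
def Subgroup.powHom (H : Subgroup G) [IsMulCommutative H] (n : ℕ) : H →* G :=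
  H.subtype.comp (powMonoidHom n)

@[simp]
theorem Subgroup.powHom_apply (H : Subgroup G) [IsMulCommutative H] (n : ℕ) (h : H) :
    H.powHom n h = (h : G) ^ n :=
  rfl

theorem Subgroup.range_zpowers_powHom (x : G) (n : ℕ) :
    ((zpowers x).powHom n).range = zpowers (x ^ n) := by
  ext g
  simp only [MonoidHom.mem_range, Subtype.exists, powHom_apply, mem_zpowers_iff, exists_prop,
    exists_exists_eq_and, ← zpow_natCast, ← zpow_mul, mul_comm]

end

theorem relCommDeg_zpowers_lt_of_prime_dvd_general (G : Type*) [Group G] [Finite G]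
    (x : G) (p : ℕ) (hp : p.Prime)
    (hdvd : p ∣ orderOf (QuotientGroup.mk x : G ⧸ Subgroup.center G)) :
    relCommDeg (Subgroup.zpowers x) < relCommDeg (Subgroup.zpowers (x ^ p)) := by
  obtain ⟨y, hyx, hy, hyp⟩ := exists_mem_zpowers_notMem_pow_mem hp.ne_one hdvd
  rw [← range_zpowers_powHom]
  refine relCommDeg_lt_relCommDeg_range _
    (fun _ => centralizer_singleton_le_centralizer_pow _ _) ⟨⟨y, hyx⟩, ?_⟩
  rw [powHom_apply, centralizer_eq_top_iff_subset.mpr (Set.singleton_subset_iff.mpr hyp),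
    lt_top_iff_ne_top, Ne, centralizer_eq_top_iff_subset, Set.singleton_subset_iff]
  exact hy

theorem relCommDeg_zpowers_lt_of_prime_dvd (G : Type*) [Group G] [Finite G]
    (hG : ¬ ∀ a b : G, a * b = b * a) (x : G) (p : ℕ) (hp : p.Prime)
    (hdvd : p ∣ orderOf (QuotientGroup.mk x : G ⧸ Subgroup.center G)) :
    relCommDeg (Subgroup.zpowers x) < relCommDeg (Subgroup.zpowers (x ^ p)) :=
  relCommDeg_zpowers_lt_of_prime_dvd_general G x p hp hdvd
end

section
/- Let G be a finite non-abelian group, H ≤ G, and g ∈ G \ C_G(H). If A, B are subgroups of H with C_H(g) ≤ A < B ≤ H, then d(B,G) < d(A,G). -/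
/-!
Writing `C_K(x)` for the centralizer of `x` in `K`, counting commuting pairs fibrewise over
`x ∈ G` gives `d(K,G) = (1/|G|) ∑ₓ |C_K(x)|/|K|`. For `A ≤ B` each summand can only drop when
passing from `A` to `B`, because `[C_B(x) : C_A(x)] ≤ [B : A]`. At `x = g` it drops strictly:
`C_B(g) = C_A(g)` is squeezed between `C_H(g) ≤ A` and `B ≤ H`, while `|A| < |B|`.
-/

namespace Subgroup

variable {G : Type*} [Group G]

theorem card_mul_relIndex {A B : Subgroup G} (h : A ≤ B) :
    Nat.card A * A.relIndex B = Nat.card B := by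
  simpa only [relIndex_bot_left] using relIndex_mul_relIndex _ _ _ bot_le h

theorem relIndex_inf_le_relIndex (C : Subgroup G) {A B : Subgroup G} [A.IsFiniteRelIndex B]
    (h : A ≤ B) :
    (C ⊓ A).relIndex (C ⊓ B) ≤ A.relIndex B := by
  have hA : A ⊓ (C ⊓ B) = C ⊓ A := by rw [inf_left_comm, inf_eq_left.mpr h]
  rw [← hA, inf_relIndex_right]
  exact relIndex_le_of_le_right inf_le_right relIndex_ne_zero

theorem card_inf_div_card_le [Finite G] (C : Subgroup G) {A B : Subgroup G} (h : A ≤ B) :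
    (Nat.card (C ⊓ B : Subgroup G) : ℚ) / Nat.card B ≤
      Nat.card (C ⊓ A : Subgroup G) / Nat.card A := by
  rw [div_le_div_iff₀ (by exact_mod_cast Nat.card_pos) (by exact_mod_cast Nat.card_pos),
    ← card_mul_relIndex (inf_le_inf_left C h), ← card_mul_relIndex h]
  have : A.IsFiniteRelIndex B := isFiniteRelIndex_of_finiteIndex
  have hindex := relIndex_inf_le_relIndex C h
  norm_cast
  rw [mul_right_comm, mul_assoc]
  gcongr

end Subgroup

open Subgroup

section

variable {G : Type*} [Group G] [Fintype G]

theorem card_commutingPairs_eq_sum (K : Subgroup G) :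
    Nat.card {p : K × G // (p.1 : G) * p.2 = p.2 * (p.1 : G)} =
      ∑ x : G, Nat.card (centralizer {x} ⊓ K : Subgroup G) := by
  let e : {p : K × G // (p.1 : G) * p.2 = p.2 * (p.1 : G)} ≃
      Σ x : G, (centralizer {x} ⊓ K : Subgroup G) :=
    { toFun := fun p => ⟨p.1.2, p.1.1, mem_inf.mpr ⟨mem_centralizer_singleton_iff.mpr p.2, p.1.1.2⟩⟩
      invFun := fun s => ⟨(⟨s.2, (mem_inf.mp s.2.2).2⟩, s.1),
        mem_centralizer_singleton_iff.mp (mem_inf.mp s.2.2).1⟩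
      left_inv := fun _ => rfl
      right_inv := fun _ => rfl }
  rw [Nat.card_congr e, Nat.card_sigma]

theorem relCommDeg_eq_sum (K : Subgroup G) :
    relCommDeg K =
      (∑ x : G, (Nat.card (centralizer {x} ⊓ K : Subgroup G) : ℚ) / Nat.card K) / Nat.card G := by
  rw [relCommDeg, card_commutingPairs_eq_sum, ← Finset.sum_div, Nat.cast_sum, div_div]

end

theorem relCommDeg_lt_of_centralizer_chain_general (G : Type*) [Group G] [Finite G]
    (H : Subgroup G) (g : G)
    (A B : Subgroup G) (hCA : Subgroup.centralizer {g} ⊓ H ≤ A)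
    (hAB : A < B) (hBH : B ≤ H) :
    relCommDeg B < relCommDeg A := by
  have := Fintype.ofFinite G
  have hcard : Nat.card A < Nat.card B := Set.Finite.card_lt_card (Set.toFinite _) hAB
  have hgB : centralizer {g} ⊓ B = centralizer {g} ⊓ A :=
    le_antisymm (le_inf inf_le_left ((inf_le_inf_left _ hBH).trans hCA))
      (inf_le_inf_left _ hAB.le)
  have hg_lt : (Nat.card (centralizer {g} ⊓ B : Subgroup G) : ℚ) / Nat.card B <
      Nat.card (centralizer {g} ⊓ A : Subgroup G) / Nat.card A := by
    rw [hgB]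
    exact div_lt_div_of_pos_left (by exact_mod_cast Nat.card_pos)
      (by exact_mod_cast Nat.card_pos) (by exact_mod_cast hcard)
  rw [relCommDeg_eq_sum, relCommDeg_eq_sum]
  refine div_lt_div_of_pos_right ?_ (by exact_mod_cast Nat.card_pos)
  exact Finset.sum_lt_sum (fun x _ => card_inf_div_card_le _ hAB.le) ⟨g, Finset.mem_univ g, hg_lt⟩

theorem relCommDeg_lt_of_centralizer_chain (G : Type*) [Group G] [Finite G]
    (hG : ¬ ∀ a b : G, a * b = b * a) (H : Subgroup G) (g : G)
    (hg : g ∉ Subgroup.centralizer (H : Set G))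
    (A B : Subgroup G) (hCA : Subgroup.centralizer {g} ⊓ H ≤ A)
    (hAB : A < B) (hBH : B ≤ H) :
    relCommDeg B < relCommDeg A :=
  relCommDeg_lt_of_centralizer_chain_general G H g A B hCA hAB hBH
end

section
/- Let H and K be finite groups of coprime orders. Then D(H × K) = {d₁·d₂ : d₁ ∈ D(H), d₂ ∈ D(K)}, where D(X) denotes the set of all relative commutativity degrees {d(L,X) : L ≤ X}. -/
/-- The commuting pairs of a product subgroup biject with the product of commuting pairs. -/
def commPairsProdEquiv {H K : Type*} [Group H] [Group K]
    (L₁ : Subgroup H) (L₂ : Subgroup K) :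
    {p : (L₁.prod L₂) × (H × K) // (p.1 : H × K) * p.2 = p.2 * (p.1 : H × K)} ≃
      {p : L₁ × H // (p.1 : H) * p.2 = p.2 * (p.1 : H)} ×
        {p : L₂ × K // (p.1 : K) * p.2 = p.2 * (p.1 : K)} where
  toFun x :=
    (⟨(⟨(x.1.1 : H × K).1, x.1.1.2.1⟩, x.1.2.1), congrArg Prod.fst x.2⟩,
     ⟨(⟨(x.1.1 : H × K).2, x.1.1.2.2⟩, x.1.2.2), congrArg Prod.snd x.2⟩)
  invFun y :=
    ⟨(⟨((y.1.1.1 : H), (y.2.1.1 : K)), ⟨y.1.1.1.2, y.2.1.1.2⟩⟩, (y.1.1.2, y.2.1.2)),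
      Prod.ext y.1.2 y.2.2⟩
  left_inv x := rfl
  right_inv y := rfl

theorem relCommDeg_prod {H K : Type*} [Group H] [Group K]
    (L₁ : Subgroup H) (L₂ : Subgroup K) :
    relCommDeg (L₁.prod L₂) = relCommDeg L₁ * relCommDeg L₂ := by
  unfold relCommDeg
  rw [Nat.card_congr (commPairsProdEquiv L₁ L₂), Nat.card_prod,
    Nat.card_congr (Subgroup.prodEquiv L₁ L₂).toEquiv, Nat.card_prod,
    Nat.card_prod]
  push_cast
  rw [div_mul_div_comm]
  ring_nf

theorem fst_one_mem {H K : Type*} [Group H] [Group K] [Finite H] [Finite K]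
    (hcop : (Nat.card H).Coprime (Nat.card K)) (L : Subgroup (H × K)) {g : H × K}
    (hg : g ∈ L) : ((g.1, (1 : K)) : H × K) ∈ L := by
  obtain ⟨m, hm⟩ := exists_pow_eq_self_of_coprime
    (hcop.symm.coprime_dvd_right (orderOf_dvd_natCard g.1))
  have key : g ^ (Nat.card K * m) ∈ L := pow_mem hg _
  have he : g ^ (Nat.card K * m) = (g.1, 1) := by
    ext
    · simp [pow_mul, hm]
    · simp [pow_mul, pow_card_eq_one']
  rwa [he] at key

theorem snd_one_mem {H K : Type*} [Group H] [Group K] [Finite H] [Finite K]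
    (hcop : (Nat.card H).Coprime (Nat.card K)) (L : Subgroup (H × K)) {g : H × K}
    (hg : g ∈ L) : (((1 : H), g.2) : H × K) ∈ L := by
  obtain ⟨m, hm⟩ := exists_pow_eq_self_of_coprime
    (hcop.coprime_dvd_right (orderOf_dvd_natCard g.2))
  have key : g ^ (Nat.card H * m) ∈ L := pow_mem hg _
  have he : g ^ (Nat.card H * m) = (1, g.2) := by
    ext
    · simp [pow_mul, pow_card_eq_one']
    · simp [pow_mul, hm]
  rwa [he] at key

theorem subgroup_prod_eq {H K : Type*} [Group H] [Group K] [Finite H] [Finite K]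
    (hcop : (Nat.card H).Coprime (Nat.card K)) (L : Subgroup (H × K)) :
    L = (L.map (MonoidHom.fst H K)).prod (L.map (MonoidHom.snd H K)) := by
  apply le_antisymm
  · intro g hg
    exact ⟨⟨g, hg, rfl⟩, ⟨g, hg, rfl⟩⟩
  · rintro ⟨h, k⟩ ⟨⟨g, hg, rfl⟩, ⟨g', hg', hk⟩⟩
    have h1 : ((g.1, (1 : K)) : H × K) ∈ L := fst_one_mem hcop L hg
    have h2 : (((1 : H), g'.2) : H × K) ∈ L := snd_one_mem hcop L hg'
    have := mul_mem h1 h2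
    rw [show k = g'.2 from hk.symm]; simpa using this

theorem commDegSet_prod (H K : Type*) [Group H] [Group K] [Finite H] [Finite K]
    (hcop : (Nat.card H).Coprime (Nat.card K)) :
    commDegSet (H × K) =
      {q : ℚ | ∃ d₁ ∈ commDegSet H, ∃ d₂ ∈ commDegSet K, q = d₁ * d₂} := by
  ext q
  constructor
  · rintro ⟨L, rfl⟩
    refine ⟨relCommDeg (L.map (MonoidHom.fst H K)), ⟨_, rfl⟩,
      relCommDeg (L.map (MonoidHom.snd H K)), ⟨_, rfl⟩, ?_⟩
    rw [← relCommDeg_prod, ← subgroup_prod_eq hcop L]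
  · rintro ⟨d₁, ⟨L₁, rfl⟩, d₂, ⟨L₂, rfl⟩, rfl⟩
    exact ⟨L₁.prod L₂, relCommDeg_prod L₁ L₂⟩
end

section
/- Let G be a finite group with G/Z(G) ≅ C_p × C_p for a prime p. Then D(G) = {1, (2p−1)/p², (p²+p−1)/p³}, where D(G) is the set of all relative commutativity degrees of G. -/
/-!
If `[G : Z(G)] = p²`, the centralizer of a noncentral element has index `p`, so `d(H,G)` is the
average over `h ∈ H` of `1` (for central `h`) or `1/p`. Writing `k = |H ∩ Z(G)|` and
`n = |HZ(G)/Z(G)|`, so that `|H| = kn`, this average is `(n + p - 1)/(pn)`. Here `n` runs over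
the divisors `1, p, p²` of `p²`, each attained by the preimage of a subgroup of `G/Z(G)` of that
order.
-/

open Subgroup

section

variable {G : Type*} [Group G]

theorem relCommDeg_eq_sum_inv_index_centralizer [Finite G] (H : Subgroup G) [Fintype H] :
    relCommDeg H = (∑ h : H, ((centralizer {(h : G)}).index : ℚ)⁻¹) / Nat.card H := by
  have hG : (Nat.card G : ℚ) ≠ 0 := Nat.cast_ne_zero.2 Nat.card_pos.ne'
  have hcard (h : H) : (Nat.card (centralizer {(h : G)}) : ℚ) =
      Nat.card G * ((centralizer {(h : G)}).index : ℚ)⁻¹ := by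
    rw [← card_mul_index (centralizer {(h : G)}), Nat.cast_mul,
      mul_inv_cancel_right₀ (Nat.cast_ne_zero.2 (index_ne_zero_of_finite))]
  rw [relCommDeg, card_commutingPairs_eq_sum_card_centralizer, Nat.cast_sum,
    Finset.sum_congr rfl fun h _ => hcard h, ← Finset.mul_sum]
  field_simp

theorem index_centralizer_of_notMem_center {p : ℕ} (hp : p.Prime)
    (hZ : (center G).index = p ^ 2) {g : G} (hg : g ∉ center G) :
    (centralizer {g}).index = p := by
  have hle : center G ≤ centralizer {g} := center_le_centralizer {g}
  obtain ⟨i, hi, hindex⟩ := (Nat.dvd_prime_pow hp).1 (hZ ▸ index_dvd_of_le hle)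
  interval_cases i
  · exact absurd (centralizer_eq_top_iff_subset.1 (index_eq_one.1 hindex) rfl) hg
  · exact hindex.trans (pow_one p)
  · have hrel := relIndex_mul_index hle
    rw [hindex, hZ, Nat.mul_eq_right (pow_ne_zero 2 hp.ne_zero), relIndex_eq_one] at hrel
    exact absurd (hrel (mem_centralizer_singleton_iff.2 rfl)) hg

theorem card_subgroupOf_mul_card_map_mk (N H : Subgroup G) [N.Normal] :
    Nat.card (N.subgroupOf H) * Nat.card (H.map (QuotientGroup.mk' N)) = Nat.card H := by
  rw [← relIndex_ker, QuotientGroup.ker_mk']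
  exact card_mul_index (N.subgroupOf H)

theorem relCommDeg_eq_of_index_center [Finite G] {p : ℕ} (hp : p.Prime)
    (hZ : (center G).index = p ^ 2) (H : Subgroup G) :
    relCommDeg H = ((p : ℚ) - 1 + Nat.card (H.map (QuotientGroup.mk' (center G)))) /
      (p * Nat.card (H.map (QuotientGroup.mk' (center G)))) := by
  classical
  have := Fintype.ofFinite H
  set n := Nat.card (H.map (QuotientGroup.mk' (center G)))
  set k := Nat.card ((center G).subgroupOf H)
  have hinv (h : H) : ((centralizer {(h : G)}).index : ℚ)⁻¹ =
      1 / p + if h ∈ (center G).subgroupOf H then 1 - (1 / p : ℚ) else 0 := by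
    by_cases hh : (h : G) ∈ center G
    · simp [mem_subgroupOf, hh, centralizer_eq_top_iff_subset.2 (Set.singleton_subset_iff.2 hh)]
    · simp [mem_subgroupOf, hh, index_centralizer_of_notMem_center hp hZ hh]
  have hsum : ∑ h : H, ((centralizer {(h : G)}).index : ℚ)⁻¹ =
      Nat.card H / p + k * (1 - 1 / p) := by
    rw [Finset.sum_congr rfl fun h _ => hinv h, Finset.sum_add_distrib, Finset.sum_ite,
      Finset.sum_const_zero, add_zero, Finset.sum_const, Finset.sum_const, Finset.card_univ,
      ← Fintype.card_subtype, nsmul_eq_mul, nsmul_eq_mul]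
    simp only [k, Nat.card_eq_fintype_card]
    ring
  have hH : (Nat.card H : ℚ) = k * n := by
    exact_mod_cast (card_subgroupOf_mul_card_map_mk (center G) H).symm
  have hp0 : (p : ℚ) ≠ 0 := Nat.cast_ne_zero.2 hp.ne_zero
  have hk0 : (k : ℚ) ≠ 0 := Nat.cast_ne_zero.2 Nat.card_pos.ne'
  have hn0 : (n : ℚ) ≠ 0 := Nat.cast_ne_zero.2 Nat.card_pos.ne'
  rw [relCommDeg_eq_sum_inv_index_centralizer, hsum, hH]
  field_simp
  ring

theorem commDegSet_eq_of_index_center [Finite G] {p : ℕ} (hp : p.Prime)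
    (hZ : (center G).index = p ^ 2) :
    commDegSet G = (fun i : ℕ => ((p : ℚ) - 1 + p ^ i) / (p * p ^ i)) '' Set.Iic 2 := by
  have : Fact p.Prime := ⟨hp⟩
  have hQ : Nat.card (G ⧸ center G) = p ^ 2 := hZ
  ext q
  constructor
  · rintro ⟨H, rfl⟩
    obtain ⟨i, hi, hcard⟩ := (Nat.dvd_prime_pow hp).1 (hQ ▸ card_subgroup_dvd_card
      (H.map (QuotientGroup.mk' (center G))))
    exact ⟨i, hi, by rw [relCommDeg_eq_of_index_center hp hZ, hcard]; push_cast; rfl⟩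
  · rintro ⟨i, hi, rfl⟩
    obtain ⟨K, hK⟩ := Sylow.exists_subgroup_card_pow_prime p
      (hQ ▸ pow_dvd_pow p hi : p ^ i ∣ Nat.card (G ⧸ center G))
    refine ⟨K.comap (QuotientGroup.mk' (center G)), ?_⟩
    rw [relCommDeg_eq_of_index_center hp hZ,
      map_comap_eq_self_of_surjective (QuotientGroup.mk'_surjective _), hK]
    push_cast
    rfl

end

theorem commDegSet_of_central_quotient_CpCp (G : Type*) [Group G] [Finite G]
    (p : ℕ) (hp : p.Prime)
    (h : Nonempty ((G ⧸ Subgroup.center G) ≃* Multiplicative (ZMod p × ZMod p))) :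
    commDegSet G =
      {1, (2 * p - 1) / (p : ℚ) ^ 2, ((p : ℚ) ^ 2 + p - 1) / (p : ℚ) ^ 3} := by
  obtain ⟨e⟩ := h
  have hZ : (center G).index = p ^ 2 := by
    have : NeZero p := ⟨hp.ne_zero⟩
    rw [index_eq_card, Nat.card_congr (e.toEquiv.trans Multiplicative.toAdd), Nat.card_prod,
      Nat.card_zmod, sq]
  have hIic : Set.Iic 2 = ({0, 1, 2} : Set ℕ) := by
    ext i
    simp only [Set.mem_Iic, Set.mem_insert_iff, Set.mem_singleton_iff]
    omega
  have hp0 : (p : ℚ) ≠ 0 := Nat.cast_ne_zero.2 hp.ne_zero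
  rw [commDegSet_eq_of_index_center hp hZ, hIic, Set.image_insert_eq, Set.image_insert_eq,
    Set.image_singleton]
  congr 1
  · rw [pow_zero, mul_one, sub_add_cancel, div_self hp0]
  congr 1
  · field_simp
    ring
  · congr 1
    field_simp
    ring
end

section
/- Let G be a finite p-group all of whose non-central elements have conjugacy classes of the same size p^m, and |G/Z(G)| = pⁿ. Then D(G) = {(p^m + pⁱ − 1)/p^{m+i} : 0 ≤ i ≤ n}, and hence |D(G)| = n+1. -/
section aux

variable {G : Type*} [Group G]

omit [Group G] in
lemma aux_dummy : True := trivial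

/-- Orbit-stabilizer for conjugation. -/
lemma aux_card_conj_mul_card_centralizer [Finite G] (g : G) :
    Nat.card {x : G // IsConj g x} * Nat.card (Subgroup.centralizer ({g} : Set G)) = Nat.card G := by
  have h1 : Nat.card {x : G // IsConj g x} = Nat.card (MulAction.orbit (ConjAct G) g) :=
    Nat.card_congr (Equiv.subtypeEquivRight fun x => by
      rw [ConjAct.mem_orbit_conjAct, isConj_comm]).symm
  have h2 : Nat.card (Subgroup.centralizer ({g} : Set G))
      = Nat.card (MulAction.stabilizer (ConjAct G) g) := by
    rw [Subgroup.centralizer_eq_comap_stabilizer]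
    exact Nat.card_congr (ConjAct.toConjAct.toEquiv.subtypeEquiv fun a => Iff.rfl)
  rw [h1, h2, ← Nat.card_prod]
  rw [Nat.card_congr (MulAction.orbitProdStabilizerEquivGroup (ConjAct G) g)]
  rfl

lemma aux_centralizer_of_center {g : G} (hg : g ∈ Subgroup.center G) :
    Subgroup.centralizer ({g} : Set G) = ⊤ := by
  rw [eq_top_iff]
  intro x _
  rw [Subgroup.mem_centralizer_singleton_iff]
  exact Subgroup.mem_center_iff.mp hg x

lemma aux_card_commPairs [Finite G] (H : Subgroup G) [Fintype H] :
    (Nat.card {pr : H × G // (pr.1 : G) * pr.2 = pr.2 * (pr.1 : G)} : ℚ)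
      = ∑ h : H, (Nat.card (Subgroup.centralizer ({(h : G)} : Set G)) : ℚ) := by
  classical
  letI : Fintype G := Fintype.ofFinite G
  rw [Nat.card_congr (Equiv.subtypeProdEquivSigmaSubtype
    fun (h : H) (g : G) => (h : G) * g = g * (h : G))]
  rw [Nat.card_eq_fintype_card, Fintype.card_sigma]
  push_cast
  refine Finset.sum_congr rfl fun h _ => ?_
  congr 1
  rw [← Nat.card_eq_fintype_card]
  exact Nat.card_congr (Equiv.subtypeEquivRight fun x => by
    rw [Subgroup.mem_centralizer_singleton_iff, eq_comm])

/-- The key computation of the relative commutativity degree. -/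
lemma aux_relCommDeg_formula [Finite G] (p m : ℕ) (hp : p.Prime)
    (hcl : ∀ g : G, g ∉ Subgroup.center G → Nat.card {x : G // IsConj g x} = p ^ m)
    (H : Subgroup G) :
    relCommDeg H = ((p : ℚ) ^ m + (Nat.card (H ⧸ (Subgroup.center G).subgroupOf H) : ℚ) - 1)
      / ((p : ℚ) ^ m * (Nat.card (H ⧸ (Subgroup.center G).subgroupOf H) : ℚ)) := by
  classical
  letI : Fintype H := Fintype.ofFinite H
  set Zh := (Subgroup.center G).subgroupOf H with hZh
  have hQpos : (0 : ℚ) < (Nat.card (H ⧸ Zh) : ℚ) := by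
    exact_mod_cast (Nat.card_pos : 0 < Nat.card (H ⧸ Zh))
  have hKpos : (0 : ℚ) < (Nat.card Zh : ℚ) := by
    exact_mod_cast (Nat.card_pos : 0 < Nat.card Zh)
  have hGpos : (0 : ℚ) < (Nat.card G : ℚ) := by
    exact_mod_cast (Nat.card_pos : 0 < Nat.card G)
  have hp0 : ((p : ℚ) ^ m) ≠ 0 := pow_ne_zero _ (by exact_mod_cast hp.pos.ne')
  set P : H → Prop := fun h => (h : G) ∈ Subgroup.center G with hP
  have hfilter : ((Finset.univ.filter P).card : ℚ) = (Nat.card Zh : ℚ) := by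
    have : Nat.card Zh = Nat.card {h : H // P h} :=
      Nat.card_congr (Equiv.subtypeEquivRight fun x => Subgroup.mem_subgroupOf)
    rw [this, Nat.card_eq_fintype_card, Fintype.card_subtype]
  have hfilter' : ((Finset.univ.filter fun h => ¬ P h).card : ℚ)
      = (Nat.card H : ℚ) - (Nat.card Zh : ℚ) := by
    have h := Finset.card_filter_add_card_filter_not (s := Finset.univ) (p := P)
    rw [Finset.card_univ, ← Nat.card_eq_fintype_card] at h
    have h2 : ((Finset.univ.filter P).card : ℚ)
        + ((Finset.univ.filter fun h => ¬ P h).card : ℚ)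
        = (Nat.card H : ℚ) := by exact_mod_cast congrArg (Nat.cast : ℕ → ℚ) h
    rw [hfilter] at h2
    linarith
  have hsum : ∑ h : H, (Nat.card (Subgroup.centralizer ({(h : G)} : Set G)) : ℚ)
      = (Nat.card Zh : ℚ) * (Nat.card G : ℚ)
        + ((Nat.card H : ℚ) - (Nat.card Zh : ℚ)) * ((Nat.card G : ℚ) / (p : ℚ) ^ m) := by
    rw [← Finset.sum_filter_add_sum_filter_not Finset.univ P]
    have h1 : ∑ h ∈ Finset.univ.filter P,
        (Nat.card (Subgroup.centralizer ({(h : G)} : Set G)) : ℚ)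
        = (Nat.card Zh : ℚ) * (Nat.card G : ℚ) := by
      rw [Finset.sum_congr rfl (fun h hh => by
        rw [aux_centralizer_of_center (Finset.mem_filter.mp hh).2, Subgroup.card_top]),
        Finset.sum_const, nsmul_eq_mul, hfilter]
    have h2 : ∑ h ∈ Finset.univ.filter (fun h => ¬ P h),
        (Nat.card (Subgroup.centralizer ({(h : G)} : Set G)) : ℚ)
        = ((Nat.card H : ℚ) - (Nat.card Zh : ℚ)) * ((Nat.card G : ℚ) / (p : ℚ) ^ m) := by
      rw [Finset.sum_congr rfl (fun h hh => ?_), Finset.sum_const, nsmul_eq_mul, hfilter']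
      have hnc := (Finset.mem_filter.mp hh).2
      have key := aux_card_conj_mul_card_centralizer ((h : G))
      rw [hcl _ hnc] at key
      have hkey : ((p : ℚ) ^ m) * (Nat.card (Subgroup.centralizer ({(h : G)} : Set G)) : ℚ)
          = (Nat.card G : ℚ) := by exact_mod_cast congrArg (Nat.cast : ℕ → ℚ) key
      field_simp
      linarith [hkey]
    rw [h1, h2]
  have hH : (Nat.card H : ℚ) = (Nat.card (H ⧸ Zh) : ℚ) * (Nat.card Zh : ℚ) := by
    exact_mod_cast congrArg (Nat.cast : ℕ → ℚ)
      (Subgroup.card_eq_card_quotient_mul_card_subgroup Zh)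
  rw [relCommDeg, aux_card_commPairs, hsum, hH]
  field_simp
  ring

lemma aux_card_quot_dvd (H : Subgroup G) :
    Nat.card (H ⧸ (Subgroup.center G).subgroupOf H) ∣ Nat.card (G ⧸ Subgroup.center G) := by
  let φ := (QuotientGroup.mk' (Subgroup.center G)).comp H.subtype
  have hker : φ.ker = (Subgroup.center G).subgroupOf H := by
    rw [← MonoidHom.comap_ker, QuotientGroup.ker_mk']; rfl
  rw [← hker, Nat.card_congr (QuotientGroup.quotientKerEquivRange φ).toEquiv]
  exact Subgroup.card_subgroup_dvd_card φ.range

lemma aux_card_quot_comap (K : Subgroup (G ⧸ Subgroup.center G)) :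
    Nat.card ((K.comap (QuotientGroup.mk' (Subgroup.center G))) ⧸
      (Subgroup.center G).subgroupOf (K.comap (QuotientGroup.mk' (Subgroup.center G))))
      = Nat.card K := by
  set H := K.comap (QuotientGroup.mk' (Subgroup.center G)) with hH
  let φ := (QuotientGroup.mk' (Subgroup.center G)).comp H.subtype
  have hker : φ.ker = (Subgroup.center G).subgroupOf H := by
    rw [← MonoidHom.comap_ker, QuotientGroup.ker_mk']; rfl
  have hrange : φ.range = K := by
    rw [MonoidHom.range_comp, Subgroup.range_subtype, hH, Subgroup.map_comap_eq,
      MonoidHom.range_eq_top_of_surjective _ (QuotientGroup.mk'_surjective _), top_inf_eq]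
  rw [← hker, Nat.card_congr (QuotientGroup.quotientKerEquivRange φ).toEquiv, hrange]

end aux

theorem commDegSet_of_two_class_sizes (G : Type*) [Group G] [Finite G]
    (p m n : ℕ) (hp : p.Prime) (hpG : IsPGroup p G)
    (hcl : ∀ g : G, g ∉ Subgroup.center G →
      Nat.card {x : G // IsConj g x} = p ^ m)
    (hn : Nat.card (G ⧸ Subgroup.center G) = p ^ n) :
    commDegSet G =
        {x : ℚ | ∃ i ≤ n, x = ((p : ℚ) ^ m + (p : ℚ) ^ i - 1) / (p : ℚ) ^ (m + i)} ∧
      (commDegSet G).ncard = n + 1 := by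
  have hfact : Fact p.Prime := ⟨hp⟩
  have hpQ : (p : ℚ) ≠ 0 := by exact_mod_cast hp.pos.ne'
  have hset : commDegSet G =
      {x : ℚ | ∃ i ≤ n, x = ((p : ℚ) ^ m + (p : ℚ) ^ i - 1) / (p : ℚ) ^ (m + i)} := by
    ext x
    simp only [commDegSet, Set.mem_setOf_eq]
    constructor
    · rintro ⟨H, rfl⟩
      have hdvd : Nat.card (H ⧸ (Subgroup.center G).subgroupOf H) ∣ p ^ n :=
        hn ▸ aux_card_quot_dvd H
      obtain ⟨i, hin, hQ⟩ := (Nat.dvd_prime_pow hp).mp hdvd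
      refine ⟨i, hin, ?_⟩
      rw [aux_relCommDeg_formula p m hp hcl H, hQ, pow_add]
      push_cast
      ring
    · rintro ⟨i, hin, rfl⟩
      have hdvd : p ^ i ∣ Nat.card (G ⧸ Subgroup.center G) := by
        rw [hn]; exact pow_dvd_pow p hin
      obtain ⟨K, hK⟩ := Sylow.exists_subgroup_card_pow_prime p hdvd
      refine ⟨K.comap (QuotientGroup.mk' (Subgroup.center G)), ?_⟩
      rw [aux_relCommDeg_formula p m hp hcl _, aux_card_quot_comap K, hK, pow_add]
      push_cast
      ring
  refine ⟨hset, ?_⟩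
  rw [hset]
  set f : ℕ → ℚ := fun i => ((p : ℚ) ^ m + (p : ℚ) ^ i - 1) / (p : ℚ) ^ (m + i) with hf
  have himg : {x : ℚ | ∃ i ≤ n, x = ((p : ℚ) ^ m + (p : ℚ) ^ i - 1) / (p : ℚ) ^ (m + i)}
      = f '' (Set.Iic n) := by
    ext x
    simp only [Set.mem_image, Set.mem_Iic, Set.mem_setOf_eq, hf]
    constructor
    · rintro ⟨i, hi, rfl⟩; exact ⟨i, hi, rfl⟩
    · rintro ⟨i, hi, rfl⟩; exact ⟨i, hi, rfl⟩
  have hinj : Set.InjOn f (Set.Iic n) := by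
    intro i hi j hj hij
    by_contra hne
    have hn1 : 1 ≤ n := by
      rcases Nat.eq_zero_or_pos n with h0 | h1
      · subst h0
        simp only [Set.mem_Iic, Nat.le_zero] at hi hj
        exact (hne (hi.trans hj.symm)).elim
      · exact h1
    -- there is a noncentral element
    have hZne : (Subgroup.center G) ≠ ⊤ := by
      intro htop
      have hss : Subsingleton (G ⧸ Subgroup.center G) := by
        rw [htop]; exact QuotientGroup.subsingleton_quotient_top
      have h1 : Nat.card (G ⧸ Subgroup.center G) = 1 :=
        Nat.card_eq_one_iff_unique.mpr ⟨hss, ⟨1⟩⟩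
      rw [hn] at h1
      have := Nat.one_lt_pow (Nat.one_le_iff_ne_zero.mp hn1) hp.one_lt
      omega
    obtain ⟨g, hg⟩ : ∃ g : G, g ∉ Subgroup.center G := by
      by_contra h
      push_neg at h
      exact hZne (eq_top_iff.mpr fun x _ => h x)
    have hm1 : 1 ≤ m := by
      by_contra hm0
      push_neg at hm0
      interval_cases m
      have h1 := hcl g hg
      rw [pow_zero] at h1
      obtain ⟨hsub, -⟩ := Nat.card_eq_one_iff_unique.mp h1
      obtain ⟨y, hy⟩ : ∃ y : G, ¬ (y * g = g * y) := by
        by_contra h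
        push_neg at h
        exact hg (Subgroup.mem_center_iff.mpr h)
      have ha : IsConj g g := IsConj.refl g
      have hb : IsConj g (y * g * y⁻¹) := isConj_iff.mpr ⟨y, rfl⟩
      have heq : (⟨g, ha⟩ : {x : G // IsConj g x}) = ⟨y * g * y⁻¹, hb⟩ := hsub.elim _ _
      have hval : g = y * g * y⁻¹ := congrArg Subtype.val heq
      apply hy
      have h2 := congrArg (· * y) hval
      simp only [mul_assoc, inv_mul_cancel, mul_one] at h2
      exact h2.symm
    have key2 : (p : ℚ) ^ m * (((p : ℚ) ^ m - 1) * ((p : ℚ) ^ j - (p : ℚ) ^ i)) = 0 := by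
      rw [hf] at hij
      simp only at hij
      rw [pow_add, pow_add, div_eq_div_iff (by positivity) (by positivity)] at hij
      linear_combination hij
    have key : ((p : ℚ) ^ m - 1) * ((p : ℚ) ^ j - (p : ℚ) ^ i) = 0 := by
      rcases mul_eq_zero.mp key2 with h | h
      · exact absurd h (pow_ne_zero _ hpQ)
      · exact h
    rcases mul_eq_zero.mp key with h | h
    · have h1 : (p : ℚ) ^ m = 1 := by linarith
      have h2 : p ^ m = 1 := by exact_mod_cast h1
      have := Nat.one_lt_pow (Nat.one_le_iff_ne_zero.mp hm1) hp.one_lt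
      omega
    · have h1 : (p : ℚ) ^ i = (p : ℚ) ^ j := by linarith
      have h2 : p ^ i = p ^ j := by exact_mod_cast h1
      exact hne (Nat.pow_right_injective hp.two_le h2)
  rw [himg, Set.ncard_image_of_injOn hinj,
    show (Set.Iic n : Set ℕ) = ↑(Finset.Iic n) from (Finset.coe_Iic n).symm,
    Set.ncard_coe_finset, Nat.card_Iic]
end

section
/- Let G be a finite group and x, y ∈ G with images in G/Z(G) of distinct prime orders p and q, such that C_G(x)/Z(G)∩C_G(x) and C_G(y)Z(G)/Z(G) have prime power orders (powers of p and q respectively, as subgroups of G/Z(G)). Then either |G/Z(G)| = pq or d(⟨x⟩,G) ≠ d(⟨y⟩,G). -/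
open Subgroup

section Aux

variable {G : Type*} [Group G]

private lemma card_commuting_pairs [Finite G] (H : Subgroup G) :
    Nat.card {p : H × G // (p.1 : G) * p.2 = p.2 * (p.1 : G)} =
      ∑ᶠ h : H, Nat.card (centralizer {(h : G)}) := by
  classical
  have := Fintype.ofFinite G
  have := Fintype.ofFinite H
  have e1 : {p : H × G // (p.1 : G) * p.2 = p.2 * (p.1 : G)} ≃
      Σ h : H, {g : G // (h : G) * g = g * (h : G)} :=
    Equiv.subtypeProdEquivSigmaSubtype (fun (h : H) (g : G) => (h : G) * g = g * (h : G))
  have e2 : ∀ h : H, {g : G // (h : G) * g = g * (h : G)} ≃ (centralizer {(h : G)} : Subgroup G) :=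
    fun h => Equiv.subtypeEquivRight fun g => by
      rw [mem_centralizer_singleton_iff]; exact eq_comm
  rw [Nat.card_congr (e1.trans (Equiv.sigmaCongrRight e2))]
  rw [Nat.card_eq_fintype_card, Fintype.card_sigma]
  rw [finsum_eq_sum_of_fintype]
  simp [Nat.card_eq_fintype_card]

private lemma centralizer_eq_of_mem_zpowers {x h : G} {p : ℕ} (hp : p.Prime)
    (hx : orderOf (QuotientGroup.mk x : G ⧸ center G) = p)
    (hh : h ∈ zpowers x) (hc : h ∉ center G) :
    centralizer {h} = centralizer {x} := by
  obtain ⟨k, rfl⟩ := mem_zpowers_iff.mp hh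
  have hxp : x ^ (p : ℤ) ∈ center G := by
    rw [← QuotientGroup.eq_one_iff, QuotientGroup.mk_zpow, ← hx, zpow_natCast,
      pow_orderOf_eq_one]
  have hk : ¬ ((p : ℤ) ∣ k) := by
    intro hd
    apply hc
    rw [← QuotientGroup.eq_one_iff, QuotientGroup.mk_zpow]
    rw [← hx] at hd
    exact orderOf_dvd_iff_zpow_eq_one.mp (by exact_mod_cast hd)
  have hncop : Nat.Coprime p k.natAbs :=
    (Nat.Prime.coprime_iff_not_dvd hp).mpr (fun hd => hk (Int.natCast_dvd.mpr hd))
  have hcop : IsCoprime (p : ℤ) k := by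
    rw [Int.isCoprime_iff_gcd_eq_one]
    simpa [Int.gcd] using hncop
  obtain ⟨u, v, huv⟩ := hcop
  have hxeq : (x ^ (p : ℤ)) ^ u * (x ^ k) ^ v = x := by
    have h1 : (p : ℤ) * u + k * v = 1 := by linear_combination huv
    rw [← zpow_mul, ← zpow_mul, ← zpow_add, h1, zpow_one]
  ext g
  simp only [mem_centralizer_singleton_iff]
  constructor
  · intro hg
    have c1 : Commute (x ^ k) g := hg.symm
    have cz : Commute (x ^ (p : ℤ)) g := (Subgroup.mem_center_iff.mp hxp g).symm
    have : Commute ((x ^ (p : ℤ)) ^ u * (x ^ k) ^ v) g :=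
      Commute.mul_left (cz.zpow_left u) (c1.zpow_left v)
    rw [hxeq] at this
    exact this.symm
  · intro hg
    exact ((Commute.zpow_left hg.symm k)).symm

private lemma card_eq_card_ker_mul_card_map [Finite G] {G' : Type*} [Group G']
    (f : G →* G') (H : Subgroup G) :
    Nat.card H = Nat.card (f.comp H.subtype).ker * Nat.card (H.map f) := by
  have h1 := Subgroup.card_eq_card_quotient_mul_card_subgroup (f.comp H.subtype).ker
  have e : (H ⧸ (f.comp H.subtype).ker) ≃* (f.comp H.subtype).range :=
    QuotientGroup.quotientKerEquivRange _
  have h2 : (f.comp H.subtype).range = H.map f := by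
    rw [MonoidHom.range_comp, Subgroup.range_subtype]
  rw [h1, Nat.card_congr e.toEquiv, h2, mul_comm]

private lemma key_count [Finite G] (x : G) {p : ℕ} (hp : p.Prime)
    (hx : orderOf (QuotientGroup.mk x : G ⧸ center G) = p) :
    ∃ k : ℕ, 0 < k ∧ Nat.card (zpowers x) = k * p ∧
      (∑ᶠ h : (zpowers x), Nat.card (centralizer {(h : G)})) =
        k * Nat.card G + (k * p - k) * Nat.card (centralizer {x}) := by
  classical
  have := Fintype.ofFinite G
  have := Fintype.ofFinite (zpowers x)
  set f := QuotientGroup.mk' (center G) with hf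
  set H := zpowers x with hH
  set K := (f.comp H.subtype).ker with hK
  have hmem : ∀ h : H, h ∈ K ↔ (h : G) ∈ center G := by
    intro h
    rw [hK, MonoidHom.mem_ker, MonoidHom.comp_apply, hf]
    simp [QuotientGroup.eq_one_iff]
  have hcardmap : Nat.card (H.map f) = p := by
    rw [hH, MonoidHom.map_zpowers, Nat.card_zpowers, hf]
    exact hx
  have hd : Nat.card H = Nat.card K * p := by
    rw [card_eq_card_ker_mul_card_map f H, hcardmap]
  refine ⟨Nat.card K, Nat.card_pos, hd, ?_⟩
  rw [finsum_eq_sum_of_fintype]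
  rw [← Finset.sum_filter_add_sum_filter_not Finset.univ (fun h : H => (h : G) ∈ center G)]
  have hv1 : ∀ h ∈ Finset.univ.filter (fun h : H => (h : G) ∈ center G),
      Nat.card (centralizer {(h : G)}) = Nat.card G := by
    intro h hh
    rw [Finset.mem_filter] at hh
    rw [centralizer_eq_top_iff_subset.mpr (Set.singleton_subset_iff.mpr hh.2)]
    exact Subgroup.card_top
  have hv2 : ∀ h ∈ Finset.univ.filter (fun h : H => ¬ (h : G) ∈ center G),
      Nat.card (centralizer {(h : G)}) = Nat.card (centralizer {x}) := by
    intro h hh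
    rw [Finset.mem_filter] at hh
    rw [centralizer_eq_of_mem_zpowers hp hx h.2 hh.2]
  rw [Finset.sum_congr rfl hv1, Finset.sum_congr rfl hv2,
    Finset.sum_const, Finset.sum_const, smul_eq_mul, smul_eq_mul]
  have hk : (Finset.univ.filter (fun h : H => (h : G) ∈ center G)).card = Nat.card K := by
    rw [Nat.card_eq_fintype_card, ← Fintype.card_subtype]
    exact Fintype.card_congr (Equiv.subtypeEquivRight fun h => (hmem h).symm)
  have htot : (Finset.univ.filter (fun h : H => (h : G) ∈ center G)).card +
      (Finset.univ.filter (fun h : H => ¬ (h : G) ∈ center G)).card = Nat.card K * p := by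
    rw [Finset.card_filter_add_card_filter_not, ← hd, Nat.card_eq_fintype_card]
    simp
  rw [hk] at htot ⊢
  have : (Finset.univ.filter (fun h : H => ¬ (h : G) ∈ center G)).card
      = Nat.card K * p - Nat.card K := by omega
  rw [this]

private lemma card_centralizer_eq [Finite G] (x : G) :
    Nat.card (centralizer {x}) = Nat.card (center G) *
      Nat.card ((centralizer {x}).map (QuotientGroup.mk' (center G))) := by
  set f := QuotientGroup.mk' (center G) with hf
  have h := card_eq_card_ker_mul_card_map f (centralizer {x})
  have hker : (f.comp (centralizer {x}).subtype).ker =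
      (center G).subgroupOf (centralizer {x}) := by
    rw [← MonoidHom.comap_ker, hf, QuotientGroup.ker_mk']
    rfl
  have he : Nat.card ((center G).subgroupOf (centralizer {x})) = Nat.card (center G) :=
    Nat.card_congr (subgroupOfEquivOfLe (center_le_centralizer {x})).toEquiv
  rw [h, hker, he]

end Aux

/-- The number-theoretic core, with `p < q`. -/
private lemma nt_core {p q m A B : ℕ} (hp : p.Prime) (hq : q.Prime) (hlt : p < q)
    (ha : ∃ a : ℕ, A = p ^ a) (hb : ∃ b : ℕ, B = q ^ b)
    (hpA : p ∣ A) (hqB : q ∣ B) (hAm : A ∣ m) (hBm : B ∣ m) (hm : 0 < m)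
    (heq : q * (m + (p - 1) * A) = p * (m + (q - 1) * B)) : m = p * q := by
  obtain ⟨a, rfl⟩ := ha
  obtain ⟨b, rfl⟩ := hb
  have hp1 : 1 < p := hp.one_lt
  have hq1 : 1 < q := hq.one_lt
  obtain ⟨a', rfl⟩ : ∃ a', a = a' + 1 := by
    rcases a with - | a'
    · exfalso; simp at hpA; omega
    · exact ⟨a', rfl⟩
  obtain ⟨b', rfl⟩ : ∃ b', b = b' + 1 := by
    rcases b with - | b'
    · exfalso; simp at hqB; omega
    · exact ⟨b', rfl⟩
  have hcoppq : Nat.Coprime q p := (Nat.coprime_primes hq hp).mpr (by omega)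
  have heq' : q * m + q * ((p - 1) * p ^ (a' + 1)) = p * m + p * ((q - 1) * q ^ (b' + 1)) := by
    rw [← Nat.left_distrib, ← Nat.left_distrib]; exact heq
  -- step 1 : q ^ b' ∣ p - 1 hence b' = 0
  have hdvd1 : q ^ (b' + 1) ∣ q * ((p - 1) * p ^ (a' + 1)) := by
    have h1 : q ^ (b' + 1) ∣ q * m := Dvd.dvd.mul_left hBm q
    have h2 : q ^ (b' + 1) ∣ p * m := Dvd.dvd.mul_left hBm p
    have h3 : q ^ (b' + 1) ∣ p * ((q - 1) * q ^ (b' + 1)) := ⟨p * (q - 1), by ring⟩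
    have h4 := Nat.dvd_add h2 h3
    rw [← heq'] at h4
    exact (Nat.dvd_add_right h1).mp h4
  have hdvd1' : q ^ b' ∣ (p - 1) * p ^ (a' + 1) := by
    rw [pow_succ'] at hdvd1
    exact (mul_dvd_mul_iff_left (by omega : q ≠ 0)).mp hdvd1
  have hdvd2 : q ^ b' ∣ p - 1 :=
    (hcoppq.pow _ _).dvd_of_dvd_mul_right hdvd1'
  have hb'0 : b' = 0 := by
    by_contra h
    have h5 : q ≤ q ^ b' := Nat.le_self_pow h q
    have h6 := Nat.le_of_dvd (by omega) hdvd2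
    omega
  subst hb'0
  -- step 2 : p ^ a' ∣ q - 1
  have hdvd3 : p ^ (a' + 1) ∣ p * ((q - 1) * q ^ (0 + 1)) := by
    have h1 : p ^ (a' + 1) ∣ p * m := Dvd.dvd.mul_left hAm p
    have h2 : p ^ (a' + 1) ∣ q * m := Dvd.dvd.mul_left hAm q
    have h3 : p ^ (a' + 1) ∣ q * ((p - 1) * p ^ (a' + 1)) := ⟨q * (p - 1), by ring⟩
    have h4 := Nat.dvd_add h2 h3
    rw [heq'] at h4
    exact (Nat.dvd_add_right h1).mp h4
  have hdvd3' : p ^ a' ∣ (q - 1) * q ^ (0 + 1) := by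
    rw [pow_succ'] at hdvd3
    exact (mul_dvd_mul_iff_left (by omega : p ≠ 0)).mp hdvd3
  have hdvd4 : p ^ a' ∣ q - 1 :=
    (hcoppq.symm.pow _ _).dvd_of_dvd_mul_right hdvd3'
  obtain ⟨s, hs⟩ := hdvd4
  have hspos : 0 < s := by
    rcases Nat.eq_zero_or_pos s with h | h
    · rw [h, mul_zero] at hs; omega
    · exact h
  -- step 3 : m = p ^ (a'+1) * q * t
  obtain ⟨t, ht⟩ : p ^ (a' + 1) * q ∣ m := by
    refine Nat.Coprime.mul_dvd_of_dvd_of_dvd ?_ hAm (by simpa using hBm)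
    exact Nat.Coprime.pow_left _ hcoppq.symm
  have htpos : 0 < t := by
    rcases Nat.eq_zero_or_pos t with h | h
    · rw [h, mul_zero] at ht; omega
    · exact h
  -- move to ℤ and cancel
  have hppos : (0:ℤ) < (p : ℤ) ^ a' := by positivity
  have hmain : (q : ℤ) * t + ((p : ℤ) - 1) = (p : ℤ) * t + s := by
    have hZ : (q:ℤ) * (↑(p ^ (a'+1) * q * t) + ((p:ℤ) - 1) * p ^ (a'+1)) =
        (p:ℤ) * (↑(p ^ (a'+1) * q * t) + ((q:ℤ) - 1) * q ^ (0+1)) := by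
      have := heq
      rw [ht] at this
      zify [Nat.one_le_iff_ne_zero.mpr (by omega : p ≠ 0),
        Nat.one_le_iff_ne_zero.mpr (by omega : q ≠ 0)] at this
      convert this using 2 <;> push_cast <;> ring
    have hsZ : (q : ℤ) - 1 = (p:ℤ) ^ a' * s := by
      have := hs
      zify [le_of_lt hq1] at this
      exact this
    have hfac : ((p:ℤ) ^ a' * p * q) * ((q : ℤ) * t + ((p : ℤ) - 1)) =
        ((p:ℤ) ^ a' * p * q) * ((p : ℤ) * t + s) := by
      push_cast at hZ
      linear_combination hZ + (p:ℤ) * (q:ℤ) * hsZ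
    exact mul_left_cancel₀ (by positivity) hfac
  -- finish
  have ha'0 : a' = 0 := by
    by_contra h
    have hP : (p:ℤ) ≤ (p:ℤ) ^ a' := by
      exact_mod_cast Nat.le_self_pow h p
    have hsZ : (q : ℤ) - 1 = (p:ℤ) ^ a' * s := by
      have := hs; zify [le_of_lt hq1] at this; exact this
    have h2 : (2:ℤ) ≤ (p:ℤ) := by exact_mod_cast hp.two_le
    have hqp : (0:ℤ) ≤ (q:ℤ) - (p:ℤ) := by
      have : (p:ℤ) ≤ (q:ℤ) := by exact_mod_cast hlt.le
      linarith
    have htge : (1:ℤ) ≤ (t:ℤ) := by exact_mod_cast htpos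
    have hsge : (q:ℤ) - 1 ≤ (s:ℤ) := by
      nlinarith [mul_nonneg hqp (sub_nonneg.mpr htge)]
    have hs1 : (1:ℤ) ≤ (s:ℤ) := by exact_mod_cast hspos
    nlinarith [hsZ, hsge, hs1, hP, h2]
  subst ha'0
  rw [pow_zero, one_mul] at hs
  subst hs
  have ht1 : t = 1 := by
    have hq1Z : (((q - 1 : ℕ)) : ℤ) = (q:ℤ) - 1 := by
      zify [le_of_lt hq1]
    rw [hq1Z] at hmain
    have hz : ((q:ℤ) - (p:ℤ)) * ((t:ℤ) - 1) = 0 := by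
      linear_combination hmain
    rcases mul_eq_zero.mp hz with h | h
    · exfalso; have hpq' : (p:ℤ) < (q:ℤ) := by exact_mod_cast hlt
      omega
    · have : (t:ℤ) = 1 := by omega
      exact_mod_cast this
  rw [ht, ht1, pow_one]
  ring

theorem relCommDeg_ne_or_order_pq (G : Type*) [Group G] [Finite G]
    (x y : G) (p q : ℕ) (hp : p.Prime) (hq : q.Prime) (hpq : p ≠ q)
    (hx : orderOf (QuotientGroup.mk x : G ⧸ Subgroup.center G) = p)
    (hy : orderOf (QuotientGroup.mk y : G ⧸ Subgroup.center G) = q)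
    (hCx : ∃ a : ℕ, Nat.card
      (Subgroup.map (QuotientGroup.mk' (Subgroup.center G))
        (Subgroup.centralizer {x})) = p ^ a)
    (hCy : ∃ b : ℕ, Nat.card
      (Subgroup.map (QuotientGroup.mk' (Subgroup.center G))
        (Subgroup.centralizer {y})) = q ^ b) :
    Nat.card (G ⧸ Subgroup.center G) = p * q ∨
      relCommDeg (Subgroup.zpowers x) ≠ relCommDeg (Subgroup.zpowers y) := by
  by_cases hEq : relCommDeg (Subgroup.zpowers x) = relCommDeg (Subgroup.zpowers y)
  swap
  · exact Or.inr hEq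
  left
  classical
  set Z := Subgroup.center G with hZ
  set m := Nat.card (G ⧸ Z) with hm
  set n := Nat.card Z with hn
  set N := Nat.card G with hNdef
  set Ax := Nat.card (Subgroup.map (QuotientGroup.mk' Z) (Subgroup.centralizer {x})) with hAx
  set Ay := Nat.card (Subgroup.map (QuotientGroup.mk' Z) (Subgroup.centralizer {y})) with hAy
  set Cx := Nat.card (Subgroup.centralizer {x}) with hCxdef
  set Cy := Nat.card (Subgroup.centralizer {y}) with hCydef
  have hN : N = m * n := Subgroup.card_eq_card_quotient_mul_card_subgroup Z
  have hCx' : Cx = n * Ax := card_centralizer_eq x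
  have hCy' : Cy = n * Ay := card_centralizer_eq y
  obtain ⟨kx, hkx0, hdx, hsumx⟩ := key_count x hp hx
  obtain ⟨ky, hky0, hdy, hsumy⟩ := key_count y hq hy
  have hm0 : 0 < m := Nat.card_pos
  have hn0 : 0 < n := Nat.card_pos
  have hN0 : 0 < N := Nat.card_pos
  -- rewrite the equality of commutativity degrees
  rw [relCommDeg, relCommDeg, card_commuting_pairs, card_commuting_pairs,
    hsumx, hsumy, hdx, hdy] at hEq
  have hdenx : ((kx * p : ℕ) : ℚ) * (N : ℚ) ≠ 0 := by
    have : (0:ℕ) < kx * p := Nat.mul_pos hkx0 hp.pos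
    positivity
  have hdeny : ((ky * q : ℕ) : ℚ) * (N : ℚ) ≠ 0 := by
    have : (0:ℕ) < ky * q := Nat.mul_pos hky0 hq.pos
    positivity
  rw [div_eq_div_iff hdenx hdeny] at hEq
  -- clean up the casts
  have e1 : kx ≤ kx * p := Nat.le_mul_of_pos_right kx hp.pos
  have e2 : ky ≤ ky * q := Nat.le_mul_of_pos_right ky hq.pos
  push_cast [Nat.cast_sub e1, Nat.cast_sub e2] at hEq
  have hNQ : (N : ℚ) = (m : ℚ) * n := by exact_mod_cast hN
  have hCxQ : (Cx : ℚ) = (n : ℚ) * Ax := by exact_mod_cast hCx'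
  have hCyQ : (Cy : ℚ) = (n : ℚ) * Ay := by exact_mod_cast hCy'
  rw [hNQ, hCxQ, hCyQ] at hEq
  have hc0 : ((kx : ℚ) * ky * m * n * n) ≠ 0 := by positivity
  have key : (q : ℚ) * ((m : ℚ) + ((p : ℚ) - 1) * Ax) =
      (p : ℚ) * ((m : ℚ) + ((q : ℚ) - 1) * Ay) := by
    refine mul_left_cancel₀ hc0 ?_
    linear_combination hEq
  have hP1 : ((p - 1 : ℕ) : ℚ) = (p : ℚ) - 1 := by
    push_cast [Nat.cast_sub hp.one_le]; ring
  have hQ1 : ((q - 1 : ℕ) : ℚ) = (q : ℚ) - 1 := by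
    push_cast [Nat.cast_sub hq.one_le]; ring
  rw [← hP1, ← hQ1] at key
  have keyN : q * (m + (p - 1) * Ax) = p * (m + (q - 1) * Ay) := by
    exact_mod_cast key
  -- divisibility facts
  have hxmem : (QuotientGroup.mk x : G ⧸ Z) ∈
      Subgroup.map (QuotientGroup.mk' Z) (Subgroup.centralizer {x}) :=
    ⟨x, Subgroup.mem_centralizer_singleton_iff.mpr rfl, rfl⟩
  have hymem : (QuotientGroup.mk y : G ⧸ Z) ∈
      Subgroup.map (QuotientGroup.mk' Z) (Subgroup.centralizer {y}) :=
    ⟨y, Subgroup.mem_centralizer_singleton_iff.mpr rfl, rfl⟩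
  have hpAx : p ∣ Ax := by
    rw [← hx]
    rw [← Subgroup.orderOf_mk _ hxmem]
    exact orderOf_dvd_natCard _
  have hqAy : q ∣ Ay := by
    rw [← hy]
    rw [← Subgroup.orderOf_mk _ hymem]
    exact orderOf_dvd_natCard _
  have hAxm : Ax ∣ m := Subgroup.card_subgroup_dvd_card _
  have hAym : Ay ∣ m := Subgroup.card_subgroup_dvd_card _
  rcases hpq.lt_or_gt with hlt | hlt
  · exact nt_core hp hq hlt hCx hCy hpAx hqAy hAxm hAym hm0 keyN
  · rw [mul_comm]
    exact nt_core hq hp hlt hCy hCx hqAy hpAx hAym hAxm hm0 keyN.symm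
end

section
/- Let G be a finite non-nilpotent group such that every nontrivial element of G/Z(G) has prime power order. Then |D(G)| ≥ l_M(G/Z(G)) + 1, where l_M(X) denotes the maximum length of chains of subgroups of X and D(G) is the set of relative commutativity degrees of G. -/
/-!
Let `H < K` be the preimages in `G` of subgroups `A < B` of `Q = G/Z(G)`. Counting commuting
pairs by their second coordinate gives `d(H,G) = |G|⁻¹ ∑_g |H : H ∩ C_G(g)|⁻¹`, and no term
increases from `H` to `K`. If no term decreased, then `|B : A| = |K ∩ C_G(g) : H ∩ C_G(g)|` would
divide `|C_Q(gZ)|` for every `g`. Since all elements of `Q` have prime power order, the centralizer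
of an element of prime order `r` is an `r`-group, and `Q`, not being nilpotent, has elements of two
distinct prime orders; so `|B : A| = 1`. Hence `d` strictly decreases along the preimage of any
chain in `Q`.
-/

open Subgroup

theorem Nat.Coprime.eq_one_or_eq_one_of_isPrimePow_mul {a b : ℕ} (hab : a.Coprime b)
    (h : IsPrimePow (a * b)) : a = 1 ∨ b = 1 := by
  have ha : a ≠ 0 := left_ne_zero_of_mul h.ne_zero
  have hb : b ≠ 0 := right_ne_zero_of_mul h.ne_zero
  rcases (hab.isPrimePow_dvd_mul h).mp dvd_rfl with hdvd | hdvd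
  · exact .inr (Nat.dvd_one.mp ((mul_dvd_mul_iff_left ha).mp (by rwa [mul_one])))
  · exact .inl (Nat.dvd_one.mp ((mul_dvd_mul_iff_right hb).mp (by rwa [one_mul])))

section PrimePowerOrder

variable {Q : Type*} [Group Q]

theorem isPGroup_centralizer_of_orderOf_eq_prime
    (hpp : ∀ x : Q, x ≠ 1 → IsPrimePow (orderOf x)) {r : ℕ} [hr : Fact r.Prime] {x : Q}
    (hx : orderOf x = r) : IsPGroup r (centralizer {x}) := by
  rw [IsPGroup.iff_orderOf]
  intro a
  rcases eq_or_ne (a : Q) 1 with ha | ha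
  · exact ⟨0, by rw [← Subgroup.orderOf_coe, ha, orderOf_one, pow_zero]⟩
  obtain ⟨s, k, hs, -, hsk⟩ := hpp a ha
  have hdvd : r ∣ orderOf (a : Q) := by
    by_contra hndvd
    have hcop : (orderOf (a : Q)).Coprime (orderOf x) :=
      hx ▸ (hr.out.coprime_iff_not_dvd.mpr hndvd).symm
    have hmul : orderOf ((a : Q) * x) = orderOf (a : Q) * orderOf x :=
      Commute.orderOf_mul_eq_mul_orderOf_of_coprime (mem_centralizer_singleton_iff.mp a.2) hcop
    have hne : orderOf (a : Q) * orderOf x ≠ 1 := by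
      rw [hx]; exact fun h => hr.out.ne_one (Nat.eq_one_of_mul_eq_one_left h)
    have hax : (a : Q) * x ≠ 1 := fun h => hne (by rw [← hmul, h, orderOf_one])
    rcases hcop.eq_one_or_eq_one_of_isPrimePow_mul (hmul ▸ hpp _ hax) with h | h
    · exact ha (orderOf_eq_one_iff.mp h)
    · exact hr.out.ne_one (hx ▸ h)
  rw [← hsk] at hdvd
  obtain rfl := (Nat.prime_dvd_prime_iff_eq hr.out (Nat.prime_iff.mpr hs)).mp
    (hr.out.dvd_of_dvd_pow hdvd)
  exact ⟨k, by rw [← Subgroup.orderOf_coe, hsk]⟩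

theorem exists_orderOf_eq_prime_ne [Finite Q] (hpp : ∀ x : Q, x ≠ 1 → IsPrimePow (orderOf x))
    {r : ℕ} [Fact r.Prime] (hQ : ¬ IsPGroup r Q) :
    ∃ (q : ℕ) (x : Q), q.Prime ∧ q ≠ r ∧ orderOf x = q := by
  rw [IsPGroup.iff_orderOf] at hQ
  push Not at hQ
  obtain ⟨y, hy⟩ := hQ
  have hy1 : y ≠ 1 := by rintro rfl; exact hy 0 (by rw [orderOf_one, pow_zero])
  obtain ⟨q, k, hq, hk, hqk⟩ := hpp y hy1
  have hq : q.Prime := Nat.prime_iff.mpr hq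
  have : Fact q.Prime := ⟨hq⟩
  have hdvd : q ∣ Nat.card Q := (dvd_pow_self q hk.ne').trans (hqk ▸ orderOf_dvd_natCard y)
  obtain ⟨x, hx⟩ := exists_prime_orderOf_dvd_card' q hdvd
  exact ⟨q, x, hq, fun h => hy k (h ▸ hqk.symm), hx⟩

theorem eq_one_of_forall_dvd_card_centralizer [Finite Q] (hnil : ¬ Group.IsNilpotent Q)
    (hpp : ∀ x : Q, x ≠ 1 → IsPrimePow (orderOf x)) {m : ℕ}
    (hm : ∀ x : Q, m ∣ Nat.card (centralizer {x})) : m = 1 := by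
  by_contra hm1
  have hr : Fact m.minFac.Prime := ⟨Nat.minFac_prime hm1⟩
  obtain ⟨q, x, hq, hqr, hx⟩ :=
    exists_orderOf_eq_prime_ne (r := m.minFac) hpp fun h => hnil h.isNilpotent
  have : Fact q.Prime := ⟨hq⟩
  obtain ⟨k, hk⟩ := IsPGroup.iff_card.mp (isPGroup_centralizer_of_orderOf_eq_prime hpp hx)
  have hdvd : m.minFac ∣ q ^ k := hk ▸ m.minFac_dvd.trans (hm x)
  exact hqr ((Nat.prime_dvd_prime_iff_eq hr.out hq).mp (hr.out.dvd_of_dvd_pow hdvd)).symm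

end PrimePowerOrder

section RelCommDeg

variable {G : Type*} [Group G]

theorem Subgroup.card_inf_mul_relIndex_s18 (H K : Subgroup G) :
    Nat.card ↥(H ⊓ K) * K.relIndex H = Nat.card H := by
  rw [← relIndex_bot_left, ← relIndex_bot_left, ← inf_relIndex_left H K]
  exact relIndex_mul_relIndex _ _ _ bot_le inf_le_left

theorem Subgroup.relIndex_ne_zero_of_finite [Finite G] {H K : Subgroup G} : H.relIndex K ≠ 0 :=
  index_ne_zero_of_finite

theorem card_commuting_pairs_eq_sum_card_inf_centralizer [Fintype G] (H : Subgroup G) :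
    Nat.card {p : H × G // (p.1 : G) * p.2 = p.2 * p.1} =
      ∑ g : G, Nat.card ↥(H ⊓ centralizer {g}) := by
  classical
  let e : {p : H × G // (p.1 : G) * p.2 = p.2 * p.1} ≃ Σ g : G, ↥(H ⊓ centralizer {g}) :=
    { toFun := fun p => ⟨p.1.2, p.1.1, p.1.1.2, mem_centralizer_singleton_iff.mpr p.2⟩
      invFun := fun x => ⟨(⟨x.2, x.2.2.1⟩, x.1), mem_centralizer_singleton_iff.mp x.2.2.2⟩
      left_inv := fun _ => rfl
      right_inv := fun _ => rfl }
  rw [Nat.card_congr e, Nat.card_sigma]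

variable {Q : Type*} [Group Q] [Finite G] {f : G →* Q}

theorem relIndex_dvd_card_centralizer_of_relIndex_comap_eq (hf : Function.Surjective f)
    {A B : Subgroup Q} (hAB : A ≤ B) {g : G}
    (h : (centralizer {g}).relIndex (A.comap f) = (centralizer {g}).relIndex (B.comap f)) :
    A.relIndex B ∣ Nat.card (centralizer {f g}) := by
  set C := centralizer {g}
  have hindex : (A.comap f).relIndex (C ⊓ B.comap f) = A.relIndex B := by
    have hC : C.relIndex (B.comap f) ≠ 0 := relIndex_ne_zero_of_finite
    apply Nat.eq_of_mul_eq_mul_right (Nat.pos_of_ne_zero hC)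
    rw [relIndex_inf_mul_relIndex, ← relIndex_mul_relIndex _ _ _ inf_le_left (comap_mono hAB),
      inf_relIndex_left, h, mul_comm, relIndex_comap, map_comap_eq_self_of_surjective hf]
  have hmap : (C ⊓ B.comap f).map f ≤ centralizer {f g} := by
    refine (map_mono inf_le_left).trans ?_
    simpa only [Set.image_singleton] using map_centralizer_le_centralizer_image {g} f
  rw [← hindex, relIndex_comap]
  exact (relIndex_dvd_card _ _).trans (card_dvd_of_le hmap)

theorem relCommDeg_comap_lt_of_lt (hf : Function.Surjective f) (hnil : ¬ Group.IsNilpotent Q)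
    (hpp : ∀ x : Q, x ≠ 1 → IsPrimePow (orderOf x)) {A B : Subgroup Q} (hAB : A < B) :
    relCommDeg (B.comap f) < relCommDeg (A.comap f) := by
  have : Finite Q := Finite.of_surjective f hf
  let : Fintype G := Fintype.ofFinite G
  have hpos : ∀ (g : G) (S : Subgroup G), (0 : ℚ) < (centralizer {g}).relIndex S :=
    fun _ _ => by exact_mod_cast Nat.pos_of_ne_zero relIndex_ne_zero_of_finite
  have hle : ∀ g : G, (centralizer {g}).relIndex (A.comap f) ≤
      (centralizer {g}).relIndex (B.comap f) := fun g =>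
    relIndex_le_of_le_right (comap_mono hAB.le) relIndex_ne_zero_of_finite
  rw [relCommDeg_eq_sum_inv_relIndex, relCommDeg_eq_sum_inv_relIndex]
  refine div_lt_div_of_pos_right ?_ (by exact_mod_cast Nat.card_pos)
  refine Finset.sum_lt_sum (fun g _ => inv_anti₀ (hpos g _) (by exact_mod_cast hle g)) ?_
  by_contra! hge
  have hrel : A.relIndex B = 1 := eq_one_of_forall_dvd_card_centralizer hnil hpp fun x => by
    obtain ⟨g, rfl⟩ := hf x
    refine relIndex_dvd_card_centralizer_of_relIndex_comap_eq hf hAB.le (le_antisymm (hle g) ?_)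
    exact_mod_cast (inv_le_inv₀ (hpos g _) (hpos g _)).mp (hge g (Finset.mem_univ g))
  exact hAB.not_ge (relIndex_eq_one.mp hrel)

end RelCommDeg

theorem commDegSet_ncard_ge_chain_length (G : Type*) [Group G] [Finite G]
    (hnil : ¬ Group.IsNilpotent G)
    (hpp : ∀ g : G ⧸ Subgroup.center G, g ≠ 1 → IsPrimePow (orderOf g)) :
    ∀ (n : ℕ) (c : Fin (n + 1) → Subgroup (G ⧸ Subgroup.center G)),
      StrictMono c → n + 1 ≤ (commDegSet G).ncard := by
  intro n c hc
  set d : Fin (n + 1) → ℚ := fun i => relCommDeg ((c i).comap (QuotientGroup.mk' (center G)))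
  have hanti : StrictAnti d := fun i j hij =>
    relCommDeg_comap_lt_of_lt (QuotientGroup.mk'_surjective _)
      (fun h => hnil (Group.of_quotient_center_nilpotent h)) hpp (hc hij)
  calc n + 1 = (Set.range d).ncard := by
        rw [Set.ncard_range_of_injective hanti.injective, Nat.card_fin]
    _ ≤ (commDegSet G).ncard :=
        Set.ncard_le_ncard (Set.range_subset_iff.mpr fun i => ⟨_, rfl⟩)
          (Set.finite_range relCommDeg)
end
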